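/- arXiv:2206.08873 — 8 statements merged into one kernel-verified Lean document; each statement's English description precedes it below -/
import Mathlib

section
/- Equivalence of relative smoothness and convexity of the difference: for convex proper functions F and φ on a convex set C and L ≥ 0, F is L-smooth relative to φ on C (i.e., F(ν) − F(μ) − d⁺F(μ)(ν−μ) ≤ L·(φ(ν) − φ(μ) − d⁺φ(μ)(ν−μ)) for all μ, ν ∈ C ∩ dom(F) ∩ dom(φ)) if and only if Lφ − F is convex on C ∩ dom(F) ∩ dom(φ). -/
/-!
Restricting `F` and `φ` to the segment `[μ, ν]` reduces both directions to convex functions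
`f`, `g` of one real variable, whose one-sided directional derivatives are `c f'₊` or `c f'₋`
according to the sign of `c`.

If `L g - f` is convex, its secant slopes on `[0, h]` are at most the one on `[0, 1]`; letting
`h → 0⁺` gives the Bregman inequality at `μ`, even when the derivatives are infinite.

Conversely, the Bregman inequality at an interior point `y` towards `x < y` and `z > y` bounds the
slope of `L g - f` on `[x, y]` above by `L g'₋ - f'₋` and on `[y, z]` below by `L g'₊ - f'₊`, so
convexity follows once the jump `f'₊ - f'₋` is at most `L` times the jump of `g`. This comes from
the Bregman inequality between `m - ε` and `m + ε`: its left side is at least `ε` times the jump of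
`f`, its right side at most `L ε` times the jump of `g` plus `o(ε)`.
-/

open Filter Set Topology

/-- `d⁺f(x)(c)`, with the junk value `0` when the one-sided limit does not exist. -/
noncomputable def oneSidedDirDeriv (f : ℝ → ℝ) (x c : ℝ) : ℝ :=
  derivWithin (fun h => f (x + h * c)) (Ioi 0) 0

noncomputable def bregmanDiv (f : ℝ → ℝ) (x y : ℝ) : ℝ :=
  f y - f x - oneSidedDirDeriv f x (y - x)

lemma sub_mul_slope (f : ℝ → ℝ) (a b : ℝ) : (b - a) * slope f a b = f b - f a := by
  simpa using sub_smul_slope f a b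

namespace ConvexOn

variable {S : Set ℝ} {f g : ℝ → ℝ} {L x y z c : ℝ}

lemma hasDerivWithinAt_comp_add_mul_of_pos (hf : ConvexOn ℝ S f) (hx : x ∈ interior S)
    (hc : 0 < c) :
    HasDerivWithinAt (fun h => f (x + h * c)) (derivWithin f (Ioi x) x * c) (Ioi 0) 0 :=
  (hf.hasDerivWithinAt_rightDeriv_of_mem_interior hx).comp_of_eq 0
    ((hasDerivAt_mul_const c).const_add x).hasDerivWithinAt
    (fun _ hh => lt_add_of_pos_right x (mul_pos hh hc)) (by simp)

lemma hasDerivWithinAt_comp_add_mul_of_neg (hf : ConvexOn ℝ S f) (hx : x ∈ interior S)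
    (hc : c < 0) :
    HasDerivWithinAt (fun h => f (x + h * c)) (derivWithin f (Iio x) x * c) (Ioi 0) 0 :=
  (hf.hasDerivWithinAt_leftDeriv_of_mem_interior hx).comp_of_eq 0
    ((hasDerivAt_mul_const c).const_add x).hasDerivWithinAt
    (fun _ hh => add_lt_of_neg_right x (mul_neg_of_pos_of_neg hh hc)) (by simp)

lemma oneSidedDirDeriv_of_pos (hf : ConvexOn ℝ S f) (hx : x ∈ interior S) (hc : 0 < c) :
    oneSidedDirDeriv f x c = derivWithin f (Ioi x) x * c :=
  (hf.hasDerivWithinAt_comp_add_mul_of_pos hx hc).derivWithin (uniqueDiffWithinAt_Ioi 0)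

lemma oneSidedDirDeriv_of_neg (hf : ConvexOn ℝ S f) (hx : x ∈ interior S) (hc : c < 0) :
    oneSidedDirDeriv f x c = derivWithin f (Iio x) x * c :=
  (hf.hasDerivWithinAt_comp_add_mul_of_neg hx hc).derivWithin (uniqueDiffWithinAt_Ioi 0)

lemma hasDerivWithinAt_oneSidedDirDeriv (hf : ConvexOn ℝ S f) (hx : x ∈ interior S) (c : ℝ) :
    HasDerivWithinAt (fun h => f (x + h * c)) (oneSidedDirDeriv f x c) (Ioi 0) 0 := by
  rcases lt_trichotomy c 0 with hc | rfl | hc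
  · simpa only [hf.oneSidedDirDeriv_of_neg hx hc] using
      hf.hasDerivWithinAt_comp_add_mul_of_neg hx hc
  · simpa [oneSidedDirDeriv] using hasDerivWithinAt_const (0 : ℝ) (Ioi 0) (f x)
  · simpa only [hf.oneSidedDirDeriv_of_pos hx hc] using
      hf.hasDerivWithinAt_comp_add_mul_of_pos hx hc

lemma sub_slope_le_bregmanDiv (hf : ConvexOn ℝ S f) (hx : x ∈ interior S) (hz : z ∈ S)
    (hxz : x < z) (hxy : x < y) :
    f y - f x - slope f x z * (y - x) ≤ bregmanDiv f x y := by
  rw [bregmanDiv, hf.oneSidedDirDeriv_of_pos hx (sub_pos.2 hxy)]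
  exact sub_le_sub_left (mul_le_mul_of_nonneg_right
    (hf.rightDeriv_le_slope_of_mem_interior hx hz hxz) (sub_nonneg.2 hxy.le)) _

lemma bregmanDiv_le_sub_slope (hf : ConvexOn ℝ S f) (hx : x ∈ interior S) (hz : z ∈ S)
    (hzx : z < x) (hxy : x < y) :
    bregmanDiv f x y ≤ f y - f x - slope f z x * (y - x) := by
  rw [bregmanDiv, hf.oneSidedDirDeriv_of_pos hx (sub_pos.2 hxy)]
  exact sub_le_sub_left (mul_le_mul_of_nonneg_right
    ((hf.slope_le_leftDeriv_of_mem_interior hz hx hzx).trans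
      (hf.leftDeriv_le_rightDeriv_of_mem_interior hx)) (sub_nonneg.2 hxy.le)) _

/-- The numerator bounds `bregmanDiv f (x - ε) (x + ε)` from above, by `bregmanDiv_le_sub_slope`
with the secant on `[x - 2ε, x - ε]`. -/
lemma tendsto_div_rightDeriv_sub_leftDeriv (hf : ConvexOn ℝ S f) (hx : x ∈ interior S) :
    Tendsto (fun ε => (f (x + ε) - 3 * f (x - ε) + 2 * f (x - 2 * ε)) / ε) (𝓝[>] 0)
      (𝓝 (derivWithin f (Ioi x) x - derivWithin f (Iio x) x)) := by
  have hderiv : HasDerivWithinAt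
      (fun ε => (f (x + ε * 1) - f x) - 3 * (f (x + ε * (-1)) - f x)
        + 2 * (f (x + ε * (-2)) - f x))
      (derivWithin f (Ioi x) x * 1 - 3 * (derivWithin f (Iio x) x * (-1))
        + 2 * (derivWithin f (Iio x) x * (-2))) (Ioi 0) 0 :=
    (((hf.hasDerivWithinAt_comp_add_mul_of_pos hx one_pos).sub_const _).sub
      (((hf.hasDerivWithinAt_comp_add_mul_of_neg hx (by norm_num)).sub_const _).const_mul 3)).add
      (((hf.hasDerivWithinAt_comp_add_mul_of_neg hx (by norm_num)).sub_const _).const_mul 2)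
  rw [hasDerivWithinAt_iff_tendsto_slope' self_notMem_Ioi] at hderiv
  convert hderiv using 2 with ε
  · rw [slope_def_field]; ring_nf
  · ring

lemma rightDeriv_sub_leftDeriv_le (hf : ConvexOn ℝ S f) (hg : ConvexOn ℝ S g) (hL : 0 ≤ L)
    (hfg : ∀ x ∈ interior S, ∀ y ∈ S, bregmanDiv f x y ≤ L * bregmanDiv g x y)
    (hx : x ∈ interior S) :
    derivWithin f (Ioi x) x - derivWithin f (Iio x) x
      ≤ L * (derivWithin g (Ioi x) x - derivWithin g (Iio x) x) := by
  have hnear : ∀ c : ℝ, ∀ᶠ ε in 𝓝[>] (0 : ℝ), x + c * ε ∈ interior S := fun c =>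
    nhdsWithin_le_nhds <| (Continuous.tendsto' (by fun_prop) 0 x (by simp)).eventually
      (isOpen_interior.mem_nhds hx)
  refine ge_of_tendsto ((hg.tendsto_div_rightDeriv_sub_leftDeriv hx).const_mul L) ?_
  filter_upwards [hnear 1, hnear (-1), hnear (-2), self_mem_nhdsWithin]
    with ε hright hleft hleft₂ (hε : 0 < ε)
  simp only [one_mul, neg_mul, ← sub_eq_add_neg] at hright hleft hleft₂
  have hlower := hf.sub_slope_le_bregmanDiv hleft (interior_subset hx) (by linarith)
    (by linarith : x - ε < x + ε)
  have hupper := hg.bregmanDiv_le_sub_slope hleft (interior_subset hleft₂) (by linarith)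
    (by linarith : x - ε < x + ε)
  have hslope_left := mul_le_mul_of_nonneg_right
    (hf.slope_le_leftDeriv_of_mem_interior (interior_subset hleft) hx (by linarith)) hε.le
  have hslope_right := mul_le_mul_of_nonneg_right
    (hf.rightDeriv_le_slope_of_mem_interior hx (interior_subset hright) (by linarith)) hε.le
  rw [← mul_div_assoc, le_div_iff₀ hε]
  calc (derivWithin f (Ioi x) x - derivWithin f (Iio x) x) * ε
      ≤ bregmanDiv f (x - ε) (x + ε) := by
        linear_combination hlower + hslope_left + hslope_right + sub_mul_slope f (x - ε) x
          + sub_mul_slope f x (x + ε)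
    _ ≤ L * bregmanDiv g (x - ε) (x + ε) := hfg _ hleft _ (interior_subset hright)
    _ ≤ L * (g (x + ε) - 3 * g (x - ε) + 2 * g (x - 2 * ε)) := by
        refine mul_le_mul_of_nonneg_left ?_ hL
        linear_combination hupper - 2 * sub_mul_slope g (x - 2 * ε) (x - ε)

theorem convexOn_mul_sub_of_bregmanDiv_le (hf : ConvexOn ℝ S f) (hg : ConvexOn ℝ S g)
    (hL : 0 ≤ L) (hfg : ∀ x ∈ interior S, ∀ y ∈ S, bregmanDiv f x y ≤ L * bregmanDiv g x y) :
    ConvexOn ℝ S (fun x => L * g x - f x) := by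
  refine convexOn_of_slope_mono_adjacent hf.1 fun {x y z} hx hz hxy hyz => ?_
  have hy : y ∈ interior S := mem_interior_iff_mem_nhds.2 <| mem_of_superset
    (Ioo_mem_nhds hxy hyz) (Ioo_subset_Icc_self.trans (hf.1.ordConnected.out hx hz))
  have hleft := hfg y hy x hx
  have hright := hfg y hy z hz
  rw [bregmanDiv, bregmanDiv, hf.oneSidedDirDeriv_of_neg hy (by linarith),
    hg.oneSidedDirDeriv_of_neg hy (by linarith)] at hleft
  rw [bregmanDiv, bregmanDiv, hf.oneSidedDirDeriv_of_pos hy (by linarith),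
    hg.oneSidedDirDeriv_of_pos hy (by linarith)] at hright
  have hjump := rightDeriv_sub_leftDeriv_le hf hg hL hfg hy
  calc (L * g y - f y - (L * g x - f x)) / (y - x)
      ≤ L * derivWithin g (Iio y) y - derivWithin f (Iio y) y := by
        rw [div_le_iff₀ (by linarith)]; linarith
    _ ≤ L * derivWithin g (Ioi y) y - derivWithin f (Ioi y) y := by linarith
    _ ≤ (L * g z - f z - (L * g y - f y)) / (z - y) := by
        rw [le_div_iff₀ (by linarith)]; linarith

end ConvexOn

def ConvexEReal {Y : Type*} [AddCommGroup Y] [Module ℝ Y] (F : Y → EReal) : Prop :=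
  ∀ x y : Y, ∀ a b : ℝ, 0 ≤ a → 0 ≤ b → a + b = 1 →
    F (a • x + b • y) ≤ (a : EReal) * F x + (b : EReal) * F y

noncomputable def lineRestrict {Y : Type*} [AddCommGroup Y] [Module ℝ Y] (F : Y → EReal)
    (μ ν : Y) (s : ℝ) : ℝ :=
  (F (μ + s • (ν - μ))).toReal

def RelSmoothOn {Y : Type*} [AddCommGroup Y] [Module ℝ Y] (F φ : Y → EReal) (L : ℝ)
    (D : Set Y) : Prop :=
  ∀ μ ∈ D, ∀ ν ∈ D, ∀ dF dφ : EReal,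
    Tendsto (fun h : ℝ => ((h⁻¹ : ℝ) : EReal) * (F (μ + h • (ν - μ)) - F μ)) (𝓝[>] 0) (𝓝 dF) →
    Tendsto (fun h : ℝ => ((h⁻¹ : ℝ) : EReal) * (φ (μ + h • (ν - μ)) - φ μ)) (𝓝[>] 0) (𝓝 dφ) →
    F ν - F μ - dF ≤ (L : EReal) * (φ ν - φ μ - dφ)

lemma EReal.tendsto_coe_sub {α : Type*} {l : Filter α} {u : α → EReal} {x : EReal} (c : ℝ)
    (hu : Tendsto u l (𝓝 x)) : Tendsto (fun a => (c : EReal) - u a) l (𝓝 (c - x)) := by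
  simp only [sub_eq_add_neg]
  exact (EReal.continuousAt_add (p := ((c : EReal), -x)) (Or.inl (EReal.coe_ne_top c))
    (Or.inl (EReal.coe_ne_bot c))).tendsto.comp (tendsto_const_nhds.prodMk_nhds hu.neg)

section lineRestrict

variable {Y : Type*} [AddCommGroup Y] [Module ℝ Y] {F φ : Y → EReal} {μ ν : Y}

lemma combo_eq_add_smul_sub (μ ν : Y) {a b : ℝ} (hab : a + b = 1) :
    a • μ + b • ν = μ + b • (ν - μ) :=
  (Convex.combo_eq_smul_sub_add hab).trans (add_comm _ _)

lemma lineRestrict_reparametrize (F : Y → EReal) (μ ν : Y) (m t : ℝ) :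
    lineRestrict F (μ + m • (ν - μ)) (μ + t • (ν - μ))
      = fun h => lineRestrict F μ ν (m + h * (t - m)) := by
  funext h
  simp only [lineRestrict]
  congr 2
  module

lemma coe_lineRestrict_zero (hbot : ∀ y, F y ≠ ⊥) (hμ : F μ ≠ ⊤) :
    (lineRestrict F μ ν 0 : EReal) = F μ := by
  simpa [lineRestrict] using EReal.coe_toReal hμ (hbot μ)

lemma coe_lineRestrict_one (hbot : ∀ y, F y ≠ ⊥) (hν : F ν ≠ ⊤) :
    (lineRestrict F μ ν 1 : EReal) = F ν := by
  simpa [lineRestrict] using EReal.coe_toReal hν (hbot ν)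

namespace ConvexEReal

lemma ne_top_of_mem_Icc (hF : ConvexEReal F) (hbot : ∀ y, F y ≠ ⊥) (hμ : F μ ≠ ⊤)
    (hν : F ν ≠ ⊤) {s : ℝ} (hs : s ∈ Icc (0 : ℝ) 1) : F (μ + s • (ν - μ)) ≠ ⊤ := by
  have hcomb := hF μ ν (1 - s) s (by linarith [hs.2]) hs.1 (by ring)
  rw [combo_eq_add_smul_sub μ ν (by ring), ← EReal.coe_toReal hμ (hbot μ),
    ← EReal.coe_toReal hν (hbot ν)] at hcomb
  exact ne_top_of_le_ne_top (by norm_cast; exact EReal.coe_ne_top _) hcomb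

lemma coe_lineRestrict (hF : ConvexEReal F) (hbot : ∀ y, F y ≠ ⊥) (hμ : F μ ≠ ⊤)
    (hν : F ν ≠ ⊤) {s : ℝ} (hs : s ∈ Icc (0 : ℝ) 1) :
    (lineRestrict F μ ν s : EReal) = F (μ + s • (ν - μ)) :=
  EReal.coe_toReal (hF.ne_top_of_mem_Icc hbot hμ hν hs) (hbot _)

lemma convexOn_lineRestrict (hF : ConvexEReal F) (hbot : ∀ y, F y ≠ ⊥) (hμ : F μ ≠ ⊤)
    (hν : F ν ≠ ⊤) : ConvexOn ℝ (Icc 0 1) (lineRestrict F μ ν) := by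
  refine ⟨convex_Icc 0 1, fun x hx y hy a b ha hb hab => ?_⟩
  have hcomb := hF (μ + x • (ν - μ)) (μ + y • (ν - μ)) a b ha hb hab
  have hxy : μ + (a • x + b • y) • (ν - μ)
      = a • (μ + x • (ν - μ)) + b • (μ + y • (ν - μ)) := by
    rw [eq_sub_of_add_eq hab]; simp only [smul_eq_mul]; module
  rw [← hxy, ← hF.coe_lineRestrict hbot hμ hν hx, ← hF.coe_lineRestrict hbot hμ hν hy,
    ← hF.coe_lineRestrict hbot hμ hν ((convex_Icc 0 1) hx hy ha hb hab)] at hcomb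
  exact_mod_cast hcomb

lemma eventuallyEq_slope_lineRestrict (hF : ConvexEReal F) (hbot : ∀ y, F y ≠ ⊥)
    (hμ : F μ ≠ ⊤) (hν : F ν ≠ ⊤) :
    (fun h : ℝ => ((h⁻¹ : ℝ) : EReal) * (F (μ + h • (ν - μ)) - F μ))
      =ᶠ[𝓝[>] 0] fun h => ((slope (lineRestrict F μ ν) 0 h : ℝ) : EReal) := by
  filter_upwards [Ioc_mem_nhdsGT (zero_lt_one' ℝ)] with h hh
  rw [← hF.coe_lineRestrict hbot hμ hν (Ioc_subset_Icc_self hh), ← coe_lineRestrict_zero hbot hμ,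
    slope_def_field]
  norm_cast
  ring

lemma tendsto_oneSidedDirDeriv_lineRestrict (hF : ConvexEReal F) (hbot : ∀ y, F y ≠ ⊥)
    (hμ : F μ ≠ ⊤) (hν : F ν ≠ ⊤) {m t : ℝ} (hm : m ∈ Ioo (0 : ℝ) 1)
    (ht : t ∈ Icc (0 : ℝ) 1) :
    Tendsto (fun h : ℝ => ((h⁻¹ : ℝ) : EReal) *
        (F (μ + m • (ν - μ) + h • (μ + t • (ν - μ) - (μ + m • (ν - μ))))
          - F (μ + m • (ν - μ))))
      (𝓝[>] 0) (𝓝 (oneSidedDirDeriv (lineRestrict F μ ν) m (t - m) : EReal)) := by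
  refine (tendsto_congr' (hF.eventuallyEq_slope_lineRestrict hbot
    (hF.ne_top_of_mem_Icc hbot hμ hν (Ioo_subset_Icc_self hm))
    (hF.ne_top_of_mem_Icc hbot hμ hν ht))).2 ?_
  have hderiv := (hF.convexOn_lineRestrict hbot hμ hν).hasDerivWithinAt_oneSidedDirDeriv
    (by rwa [interior_Icc]) (t - m)
  rw [hasDerivWithinAt_iff_tendsto_slope' self_notMem_Ioi] at hderiv
  rw [lineRestrict_reparametrize]
  exact (continuous_coe_real_ereal.tendsto _).comp hderiv

lemma mul_sub_combo_le_iff_lineRestrict (hF : ConvexEReal F) (hφ : ConvexEReal φ)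
    (hFbot : ∀ y, F y ≠ ⊥) (hφbot : ∀ y, φ y ≠ ⊥) (hFμ : F μ ≠ ⊤) (hFν : F ν ≠ ⊤)
    (hφμ : φ μ ≠ ⊤) (hφν : φ ν ≠ ⊤) (L : ℝ) {b : ℝ} (hb : b ∈ Icc (0 : ℝ) 1) :
    (L : EReal) * φ ((1 - b) • μ + b • ν) - F ((1 - b) • μ + b • ν)
        ≤ ((1 - b : ℝ) : EReal) * ((L : EReal) * φ μ - F μ)
          + (b : EReal) * ((L : EReal) * φ ν - F ν) ↔
      L * lineRestrict φ μ ν b - lineRestrict F μ ν b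
        ≤ (1 - b) * (L * lineRestrict φ μ ν 0 - lineRestrict F μ ν 0)
          + b * (L * lineRestrict φ μ ν 1 - lineRestrict F μ ν 1) := by
  rw [combo_eq_add_smul_sub μ ν (sub_add_cancel 1 b), ← hF.coe_lineRestrict hFbot hFμ hFν hb,
    ← hφ.coe_lineRestrict hφbot hφμ hφν hb, ← coe_lineRestrict_zero hFbot hFμ,
    ← coe_lineRestrict_one hFbot hFν, ← coe_lineRestrict_zero hφbot hφμ,
    ← coe_lineRestrict_one hφbot hφν]
  norm_cast

lemma add_smul_sub_mem {C : Set Y} (hC : Convex ℝ C) (hF : ConvexEReal F) (hφ : ConvexEReal φ)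
    (hFbot : ∀ y, F y ≠ ⊥) (hφbot : ∀ y, φ y ≠ ⊥)
    (hμ : μ ∈ C ∩ {y : Y | F y ≠ ⊤} ∩ {y : Y | φ y ≠ ⊤})
    (hν : ν ∈ C ∩ {y : Y | F y ≠ ⊤} ∩ {y : Y | φ y ≠ ⊤}) {s : ℝ} (hs : s ∈ Icc (0 : ℝ) 1) :
    μ + s • (ν - μ) ∈ C ∩ {y : Y | F y ≠ ⊤} ∩ {y : Y | φ y ≠ ⊤} :=
  ⟨⟨combo_eq_add_smul_sub μ ν (sub_add_cancel 1 s) ▸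
      hC hμ.1.1 hν.1.1 (sub_nonneg.2 hs.2) hs.1 (sub_add_cancel 1 s),
    hF.ne_top_of_mem_Icc hFbot hμ.1.2 hν.1.2 hs⟩, hφ.ne_top_of_mem_Icc hφbot hμ.2 hν.2 hs⟩

theorem mul_sub_combo_le_of_relSmoothOn {C : Set Y} (hC : Convex ℝ C) (hF : ConvexEReal F)
    (hφ : ConvexEReal φ) (hFbot : ∀ y, F y ≠ ⊥) (hφbot : ∀ y, φ y ≠ ⊥) {L : ℝ} (hL : 0 ≤ L)
    (hsmooth : RelSmoothOn F φ L (C ∩ {y : Y | F y ≠ ⊤} ∩ {y : Y | φ y ≠ ⊤}))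
    (hμ : μ ∈ C ∩ {y : Y | F y ≠ ⊤} ∩ {y : Y | φ y ≠ ⊤})
    (hν : ν ∈ C ∩ {y : Y | F y ≠ ⊤} ∩ {y : Y | φ y ≠ ⊤}) {a b : ℝ} (ha : 0 ≤ a) (hb : 0 ≤ b)
    (hab : a + b = 1) :
    (L : EReal) * φ (a • μ + b • ν) - F (a • μ + b • ν)
      ≤ (a : EReal) * ((L : EReal) * φ μ - F μ) + (b : EReal) * ((L : EReal) * φ ν - F ν) := by
  have hbregman : ∀ m ∈ interior (Icc (0 : ℝ) 1), ∀ t ∈ Icc (0 : ℝ) 1,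
      bregmanDiv (lineRestrict F μ ν) m t ≤ L * bregmanDiv (lineRestrict φ μ ν) m t := by
    intro m hm t ht
    rw [interior_Icc] at hm
    have hsm := hsmooth _ (add_smul_sub_mem hC hF hφ hFbot hφbot hμ hν (Ioo_subset_Icc_self hm))
      _ (add_smul_sub_mem hC hF hφ hFbot hφbot hμ hν ht) _ _
      (hF.tendsto_oneSidedDirDeriv_lineRestrict hFbot hμ.1.2 hν.1.2 hm ht)
      (hφ.tendsto_oneSidedDirDeriv_lineRestrict hφbot hμ.2 hν.2 hm ht)
    rw [← hF.coe_lineRestrict hFbot hμ.1.2 hν.1.2 ht,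
      ← hF.coe_lineRestrict hFbot hμ.1.2 hν.1.2 (Ioo_subset_Icc_self hm),
      ← hφ.coe_lineRestrict hφbot hμ.2 hν.2 ht,
      ← hφ.coe_lineRestrict hφbot hμ.2 hν.2 (Ioo_subset_Icc_self hm)] at hsm
    exact_mod_cast hsm
  have hconv := (hF.convexOn_lineRestrict hFbot hμ.1.2 hν.1.2).convexOn_mul_sub_of_bregmanDiv_le
    (hφ.convexOn_lineRestrict hφbot hμ.2 hν.2) hL hbregman
  obtain rfl : a = 1 - b := eq_sub_of_add_eq hab
  refine (hF.mul_sub_combo_le_iff_lineRestrict hφ hFbot hφbot hμ.1.2 hν.1.2 hμ.2 hν.2 L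
    ⟨hb, by linarith⟩).2 ?_
  simpa using hconv.2 (left_mem_Icc.2 zero_le_one) (right_mem_Icc.2 zero_le_one) ha hb hab

theorem bregman_le_of_mul_sub_combo_le (hF : ConvexEReal F) (hφ : ConvexEReal φ)
    (hFbot : ∀ y, F y ≠ ⊥) (hφbot : ∀ y, φ y ≠ ⊥) (hFμ : F μ ≠ ⊤) (hFν : F ν ≠ ⊤)
    (hφμ : φ μ ≠ ⊤) (hφν : φ ν ≠ ⊤) {L : ℝ}
    (hconv : ∀ a b : ℝ, 0 ≤ a → 0 ≤ b → a + b = 1 →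
      (L : EReal) * φ (a • μ + b • ν) - F (a • μ + b • ν)
        ≤ (a : EReal) * ((L : EReal) * φ μ - F μ) + (b : EReal) * ((L : EReal) * φ ν - F ν))
    {dF dφ : EReal}
    (hdF : Tendsto (fun h : ℝ => ((h⁻¹ : ℝ) : EReal) * (F (μ + h • (ν - μ)) - F μ)) (𝓝[>] 0)
      (𝓝 dF))
    (hdφ : Tendsto (fun h : ℝ => ((h⁻¹ : ℝ) : EReal) * (φ (μ + h • (ν - μ)) - φ μ)) (𝓝[>] 0)
      (𝓝 dφ)) :
    F ν - F μ - dF ≤ (L : EReal) * (φ ν - φ μ - dφ) := by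
  have hslope : ∀ h ∈ Ioc (0 : ℝ) 1,
      lineRestrict F μ ν 1 - lineRestrict F μ ν 0 - slope (lineRestrict F μ ν) 0 h
        ≤ L * (lineRestrict φ μ ν 1 - lineRestrict φ μ ν 0 - slope (lineRestrict φ μ ν) 0 h) := by
    intro h hh
    have hcvx := (hF.mul_sub_combo_le_iff_lineRestrict hφ hFbot hφbot hFμ hFν hφμ hφν L
        (Ioc_subset_Icc_self hh)).1
      (hconv (1 - h) h (sub_nonneg.2 hh.2) hh.1.le (sub_add_cancel 1 h))
    refine le_of_mul_le_mul_left ?_ hh.1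
    linear_combination hcvx - sub_mul_slope (lineRestrict F μ ν) 0 h
      + L * sub_mul_slope (lineRestrict φ μ ν) 0 h
  rw [← coe_lineRestrict_zero hFbot hFμ, ← coe_lineRestrict_one hFbot hFν,
    ← coe_lineRestrict_zero hφbot hφμ, ← coe_lineRestrict_one hφbot hφν,
    ← EReal.coe_sub, ← EReal.coe_sub]
  refine le_of_tendsto_of_tendsto
    (EReal.tendsto_coe_sub _ ((tendsto_congr'
      (hF.eventuallyEq_slope_lineRestrict hFbot hFμ hFν)).1 hdF))
    (EReal.Tendsto.const_mul (EReal.tendsto_coe_sub _ ((tendsto_congr'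
      (hφ.eventuallyEq_slope_lineRestrict hφbot hφμ hφν)).1 hdφ))
      (Or.inl (EReal.coe_ne_bot L)) (Or.inl (EReal.coe_ne_top L))) ?_
  filter_upwards [Ioc_mem_nhdsGT (zero_lt_one' ℝ)] with h hh
  exact_mod_cast hslope h hh

end ConvexEReal

end lineRestrict

theorem relative_smoothness_iff_convex_difference_general
    {Y : Type*} [AddCommGroup Y] [Module ℝ Y]
    (F φ : Y → EReal)
    (hFbot : ∀ y, F y ≠ ⊥) (hφbot : ∀ y, φ y ≠ ⊥)
    (hFconv : ∀ x y : Y, ∀ a b : ℝ, 0 ≤ a → 0 ≤ b → a + b = 1 →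
      F (a • x + b • y) ≤ (a : EReal) * F x + (b : EReal) * F y)
    (hφconv : ∀ x y : Y, ∀ a b : ℝ, 0 ≤ a → 0 ≤ b → a + b = 1 →
      φ (a • x + b • y) ≤ (a : EReal) * φ x + (b : EReal) * φ y)
    (C : Set Y) (hC : Convex ℝ C)
    (L : ℝ) (hL : 0 ≤ L) :
    -- `L`-relative smoothness of `F` w.r.t. `φ` on `C`
    (∀ μ ∈ C ∩ {y : Y | F y ≠ ⊤} ∩ {y : Y | φ y ≠ ⊤},
     ∀ ν ∈ C ∩ {y : Y | F y ≠ ⊤} ∩ {y : Y | φ y ≠ ⊤},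
      ∀ dF dφ : EReal,
        Tendsto (fun h : ℝ => ((h⁻¹ : ℝ) : EReal) * (F (μ + h • (ν - μ)) - F μ))
          (nhdsWithin (0 : ℝ) (Set.Ioi 0)) (nhds dF) →
        Tendsto (fun h : ℝ => ((h⁻¹ : ℝ) : EReal) * (φ (μ + h • (ν - μ)) - φ μ))
          (nhdsWithin (0 : ℝ) (Set.Ioi 0)) (nhds dφ) →
        F ν - F μ - dF ≤ (L : EReal) * (φ ν - φ μ - dφ))
    ↔
    -- convexity of `Lφ − F` on `C ∩ dom F ∩ dom φ`
    (∀ μ ∈ C ∩ {y : Y | F y ≠ ⊤} ∩ {y : Y | φ y ≠ ⊤},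
     ∀ ν ∈ C ∩ {y : Y | F y ≠ ⊤} ∩ {y : Y | φ y ≠ ⊤},
      ∀ a b : ℝ, 0 ≤ a → 0 ≤ b → a + b = 1 →
        (L : EReal) * φ (a • μ + b • ν) - F (a • μ + b • ν)
          ≤ (a : EReal) * ((L : EReal) * φ μ - F μ)
            + (b : EReal) * ((L : EReal) * φ ν - F ν)) := by
  have hF : ConvexEReal F := hFconv
  have hφ : ConvexEReal φ := hφconv
  exact ⟨fun hsmooth μ hμ ν hν a b ha hb hab =>
      hF.mul_sub_combo_le_of_relSmoothOn hC hφ hFbot hφbot hL hsmooth hμ hν ha hb hab,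
    fun hconv μ hμ ν hν dF dφ hdF hdφ =>
      hF.bregman_le_of_mul_sub_combo_le hφ hFbot hφbot hμ.1.2 hν.1.2 hμ.2 hν.2
        (hconv μ hμ ν hν) hdF hdφ⟩

/-- For convex proper `F, φ` and `L ≥ 0`, `F` is `L`-smooth relative to `φ`
on a convex set `C` (Bregman divergence inequality `D_F(ν|μ) ≤ L·D_φ(ν|μ)` for all
`μ, ν ∈ C ∩ dom F ∩ dom φ`, with the directional derivatives given as limits of difference
quotients) iff `Lφ − F` is convex on `C ∩ dom F ∩ dom φ`. -/
theorem relative_smoothness_iff_convex_difference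
    {Y : Type*} [AddCommGroup Y] [Module ℝ Y]
    (F φ : Y → EReal)
    (hFbot : ∀ y, F y ≠ ⊥) (hφbot : ∀ y, φ y ≠ ⊥)
    (hFproper : ∃ y, F y ≠ ⊤) (hφproper : ∃ y, φ y ≠ ⊤)
    (hFconv : ∀ x y : Y, ∀ a b : ℝ, 0 ≤ a → 0 ≤ b → a + b = 1 →
      F (a • x + b • y) ≤ (a : EReal) * F x + (b : EReal) * F y)
    (hφconv : ∀ x y : Y, ∀ a b : ℝ, 0 ≤ a → 0 ≤ b → a + b = 1 →
      φ (a • x + b • y) ≤ (a : EReal) * φ x + (b : EReal) * φ y)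
    (C : Set Y) (hC : Convex ℝ C)
    (L : ℝ) (hL : 0 ≤ L) :
    -- `L`-relative smoothness of `F` w.r.t. `φ` on `C`
    (∀ μ ∈ C ∩ {y : Y | F y ≠ ⊤} ∩ {y : Y | φ y ≠ ⊤},
     ∀ ν ∈ C ∩ {y : Y | F y ≠ ⊤} ∩ {y : Y | φ y ≠ ⊤},
      ∀ dF dφ : EReal,
        Tendsto (fun h : ℝ => ((h⁻¹ : ℝ) : EReal) * (F (μ + h • (ν - μ)) - F μ))
          (nhdsWithin (0 : ℝ) (Set.Ioi 0)) (nhds dF) →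
        Tendsto (fun h : ℝ => ((h⁻¹ : ℝ) : EReal) * (φ (μ + h • (ν - μ)) - φ μ))
          (nhdsWithin (0 : ℝ) (Set.Ioi 0)) (nhds dφ) →
        F ν - F μ - dF ≤ (L : EReal) * (φ ν - φ μ - dφ))
    ↔
    -- convexity of `Lφ − F` on `C ∩ dom F ∩ dom φ`
    (∀ μ ∈ C ∩ {y : Y | F y ≠ ⊤} ∩ {y : Y | φ y ≠ ⊤},
     ∀ ν ∈ C ∩ {y : Y | F y ≠ ⊤} ∩ {y : Y | φ y ≠ ⊤},
      ∀ a b : ℝ, 0 ≤ a → 0 ≤ b → a + b = 1 →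
        (L : EReal) * φ (a • μ + b • ν) - F (a • μ + b • ν)
          ≤ (a : EReal) * ((L : EReal) * φ μ - F μ)
            + (b : EReal) * ((L : EReal) * φ ν - F ν)) :=
  relative_smoothness_iff_convex_difference_general F φ hFbot hφbot hFconv hφconv C hC L hL
end

section
/- Three-point inequality for Bregman divergences: let φ be strictly convex with a first variation at μ (so D_φ(·|μ) is convex on C), let G be a proper convex function, and suppose ν̄ minimizes G(ν) + D_φ(ν|μ) over the convex set C. Then for all ν ∈ C ∩ dom(φ) ∩ dom(G): G(ν) + D_φ(ν|μ) ≥ G(ν̄) + D_φ(ν̄|μ) + D_φ(ν|ν̄). -/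
open Filter Set

/-- Three-point inequality for Bregman divergences: let `φ` be strictly convex
with a first variation `∇φ(μ) = gμ` at `μ` (a continuous linear functional representing the
directional derivatives of `φ` at `μ` in directions within `C`), so that
`D_φ(ν|μ) = φ(ν) − φ(μ) − ⟨gμ, ν − μ⟩`. Let `G` be proper convex and suppose `ν̄` minimizes
`G(·) + D_φ(·|μ)` over the convex set `C`. Then for all `ν ∈ C ∩ dom φ ∩ dom G`,
`G(ν) + D_φ(ν|μ) ≥ G(ν̄) + D_φ(ν̄|μ) + D_φ(ν|ν̄)`, where `D_φ(ν|ν̄) = φ(ν) − φ(ν̄) − d⁺φ(ν̄)(ν−ν̄)`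
and `d⁺φ(ν̄)(ν−ν̄)` is the limit `dν̄` of the difference quotients. -/
theorem three_point_inequality
    {Y : Type*} [AddCommGroup Y] [Module ℝ Y] [TopologicalSpace Y]
    (φ G : Y → EReal)
    (hφbot : ∀ y, φ y ≠ ⊥) (hGbot : ∀ y, G y ≠ ⊥)
    (hGproper : ∃ y, G y ≠ ⊤)
    (hφconv : ∀ x y : Y, ∀ a b : ℝ, 0 ≤ a → 0 ≤ b → a + b = 1 →
      φ (a • x + b • y) ≤ (a : EReal) * φ x + (b : EReal) * φ y)
    (hφstrict : ∀ x y : Y, x ≠ y → φ x ≠ ⊤ → φ y ≠ ⊤ → ∀ a b : ℝ, 0 < a → 0 < b → a + b = 1 →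
      φ (a • x + b • y) < (a : EReal) * φ x + (b : EReal) * φ y)
    (hGconv : ∀ x y : Y, ∀ a b : ℝ, 0 ≤ a → 0 ≤ b → a + b = 1 →
      G (a • x + b • y) ≤ (a : EReal) * G x + (b : EReal) * G y)
    (C : Set Y) (hC : Convex ℝ C)
    (μ : Y) (hμ : φ μ ≠ ⊤)
    (gμ : Y →L[ℝ] ℝ)
    (hgμ : ∀ ν ∈ C ∩ {y : Y | φ y ≠ ⊤},
      Tendsto (fun h : ℝ => ((h⁻¹ : ℝ) : EReal) * (φ (μ + h • (ν - μ)) - φ μ))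
        (nhdsWithin (0 : ℝ) (Set.Ioi 0)) (nhds ((gμ (ν - μ) : ℝ) : EReal)))
    (νb : Y) (hνbC : νb ∈ C) (hνbφ : φ νb ≠ ⊤) (hνbG : G νb ≠ ⊤)
    (hmin : ∀ ν ∈ C,
      G νb + (φ νb - φ μ - ((gμ (νb - μ) : ℝ) : EReal))
        ≤ G ν + (φ ν - φ μ - ((gμ (ν - μ) : ℝ) : EReal)))
    (ν : Y) (hνC : ν ∈ C) (hνφ : φ ν ≠ ⊤) (hνG : G ν ≠ ⊤)
    (dνb : EReal)
    (hdνb : Tendsto (fun h : ℝ => ((h⁻¹ : ℝ) : EReal) * (φ (νb + h • (ν - νb)) - φ νb))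
      (nhdsWithin (0 : ℝ) (Set.Ioi 0)) (nhds dνb)) :
    G νb + (φ νb - φ μ - ((gμ (νb - μ) : ℝ) : EReal)) + (φ ν - φ νb - dνb)
      ≤ G ν + (φ ν - φ μ - ((gμ (ν - μ) : ℝ) : EReal)) := by
  -- real values of the finite quantities
  set fμ : ℝ := (φ μ).toReal with hfμ
  set fb : ℝ := (φ νb).toReal
  set fν : ℝ := (φ ν).toReal
  set gb : ℝ := (G νb).toReal
  set gν : ℝ := (G ν).toReal
  have hφμ : φ μ = (fμ : EReal) := (EReal.coe_toReal hμ (hφbot μ)).symm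
  have hφb : φ νb = (fb : EReal) := (EReal.coe_toReal hνbφ (hφbot νb)).symm
  have hφν : φ ν = (fν : EReal) := (EReal.coe_toReal hνφ (hφbot ν)).symm
  have hGb : G νb = (gb : EReal) := (EReal.coe_toReal hνbG (hGbot νb)).symm
  have hGν : G ν = (gν : EReal) := (EReal.coe_toReal hνG (hGbot ν)).symm
  set c : ℝ := gμ (ν - νb) + gb - gν with hc
  -- key eventual bound on the difference quotients
  have hev : ∀ᶠ h in nhdsWithin (0 : ℝ) (Set.Ioi 0),
      (c : EReal) ≤ ((h⁻¹ : ℝ) : EReal) * (φ (νb + h • (ν - νb)) - φ νb) := by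
    filter_upwards [Ioo_mem_nhdsGT_of_mem (show (0:ℝ) ∈ Ico (0:ℝ) 1 by
      constructor <;> norm_num)] with h hh
    obtain ⟨hh0, hh1⟩ := hh
    have hcomb : νb + h • (ν - νb) = (1 - h) • νb + h • ν := by module
    have hmem : νb + h • (ν - νb) ∈ C := by
      rw [hcomb]
      exact hC hνbC hνC (by linarith) hh0.le (by ring)
    -- φ at the combination is finite
    have hφle : φ (νb + h • (ν - νb)) ≤ (((1 - h) * fb + h * fν : ℝ) : EReal) := by
      rw [hcomb]
      calc φ ((1 - h) • νb + h • ν) ≤ ((1 - h : ℝ) : EReal) * φ νb + (h : EReal) * φ ν :=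
            hφconv νb ν (1 - h) h (by linarith) hh0.le (by ring)
        _ = (((1 - h) * fb + h * fν : ℝ) : EReal) := by
            rw [hφb, hφν]; push_cast; ring
    have hφtop : φ (νb + h • (ν - νb)) ≠ ⊤ :=
      ne_top_of_le_ne_top (EReal.coe_ne_top _) hφle
    set p : ℝ := (φ (νb + h • (ν - νb))).toReal with hp
    have hφp : φ (νb + h • (ν - νb)) = (p : EReal) :=
      (EReal.coe_toReal hφtop (hφbot _)).symm
    -- G at the combination is finite and bounded
    have hGle : G (νb + h • (ν - νb)) ≤ (((1 - h) * gb + h * gν : ℝ) : EReal) := by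
      rw [hcomb]
      calc G ((1 - h) • νb + h • ν) ≤ ((1 - h : ℝ) : EReal) * G νb + (h : EReal) * G ν :=
            hGconv νb ν (1 - h) h (by linarith) hh0.le (by ring)
        _ = (((1 - h) * gb + h * gν : ℝ) : EReal) := by
            rw [hGb, hGν]; push_cast; ring
    have hGtop : G (νb + h • (ν - νb)) ≠ ⊤ :=
      ne_top_of_le_ne_top (EReal.coe_ne_top _) hGle
    set q : ℝ := (G (νb + h • (ν - νb))).toReal with hq
    have hGq : G (νb + h • (ν - νb)) = (q : EReal) :=
      (EReal.coe_toReal hGtop (hGbot _)).symm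
    have hqle : q ≤ (1 - h) * gb + h * gν := by
      rw [hGq] at hGle; exact_mod_cast hGle
    -- linearity of gμ
    have hlin : gμ (νb + h • (ν - νb) - μ) = gμ (νb - μ) + h * gμ (ν - νb) := by
      have : νb + h • (ν - νb) - μ = (νb - μ) + h • (ν - νb) := by module
      rw [this, map_add, map_smul]; simp
    -- minimality at the combination, translated to reals
    have hm := hmin _ hmem
    rw [hφμ, hφb, hφp, hGb, hGq, hlin] at hm
    have hmr : gb + (fb - fμ - gμ (νb - μ))
        ≤ q + (p - fμ - (gμ (νb - μ) + h * gμ (ν - νb))) := by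
      exact_mod_cast hm
    -- derive the real bound on the difference quotient
    have hkey : c ≤ h⁻¹ * (p - fb) := by
      rw [ge_iff_le.symm, ge_iff_le, ← sub_nonneg]
      have hpb : h * c ≤ p - fb := by nlinarith [hqle, hmr]
      have := (div_le_div_iff_of_pos_right hh0).mpr hpb
      have h1 : h * c / h = c := by field_simp
      have h2 : h⁻¹ * (p - fb) = (p - fb) / h := by ring
      rw [h2]; linarith [h1 ▸ this]
    rw [hφp, hφb]
    calc (c : EReal) ≤ ((h⁻¹ * (p - fb) : ℝ) : EReal) := by exact_mod_cast hkey
      _ = ((h⁻¹ : ℝ) : EReal) * ((p : EReal) - (fb : EReal)) := by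
          push_cast; ring
  have hcd : (c : EReal) ≤ dνb := ge_of_tendsto hdνb hev
  -- conclude
  rcases eq_or_ne dνb ⊤ with htop | htop
  · rw [htop]
    rw [EReal.sub_top, EReal.add_bot]
    exact bot_le
  · have hbot : dνb ≠ ⊥ := by
      intro hb; rw [hb] at hcd; exact (EReal.coe_ne_bot c) (le_bot_iff.mp hcd)
    set d : ℝ := dνb.toReal with hd
    have hdd : dνb = (d : EReal) := (EReal.coe_toReal htop hbot).symm
    have hcdr : c ≤ d := by rw [hdd] at hcd; exact_mod_cast hcd
    have hlin2 : gμ (ν - μ) = gμ (νb - μ) + gμ (ν - νb) := by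
      rw [map_sub, map_sub, map_sub]; ring
    rw [hφμ, hφb, hφν, hGb, hGν, hdd, hlin2]
    have : gb + (fb - fμ - gμ (νb - μ)) + (fν - fb - d)
        ≤ gν + (fν - fμ - (gμ (νb - μ) + gμ (ν - νb))) := by
      rw [hc] at hcdr; linarith
    exact_mod_cast this
end

section
/- Disintegration identity for KL divergence of joint measures: let π, π̄ be probability measures on X × Y with π ≪ π̄, and let K_π̄(x, dy) be the conditional kernel of π̄ given the first coordinate, so π̄ = p_X π̄ ⊗ K_π̄. Then KL(π | π̄) = KL(p_X π | p_X π̄) + KL(π | p_X π ⊗ K_π̄), where p_X denotes the first marginal. -/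
open MeasureTheory ProbabilityTheory

/- The Kullback--Leibler divergence `KL(μ|ν) = ∫ log(dμ/dν) dμ` when `μ ≪ ν` (and the
log-likelihood ratio is integrable), `+∞` otherwise. -/
open Classical in
noncomputable def klDiv {α : Type*} [MeasurableSpace α] (μ ν : Measure α) : EReal :=
  if μ ≪ ν ∧ Integrable (llr μ ν) μ then ((∫ x, llr μ ν x ∂μ : ℝ) : EReal) else ⊤

/-! Between finite measures of equal mass the correction term `ν(univ) - μ(univ)` in Mathlib's
`InformationTheory.klDiv` vanishes, so it agrees with `klDiv`. The identity is then Mathlib's chain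
rule `klDiv (μ ⊗ₘ κ) (ν ⊗ₘ η) = klDiv μ ν + klDiv (μ ⊗ₘ κ) (μ ⊗ₘ η)`, applied to the
disintegrations `p = p.fst ⊗ₘ p.condKernel` and `q = q.fst ⊗ₘ q.condKernel`. -/

lemma klDiv_eq_coe_klDiv_of_measure_univ_eq {α : Type*} [MeasurableSpace α] {μ ν : Measure α}
    [IsFiniteMeasure μ] [IsFiniteMeasure ν] (h_univ : μ Set.univ = ν Set.univ) :
    klDiv μ ν = (InformationTheory.klDiv μ ν : EReal) := by
  by_cases h : μ ≪ ν ∧ Integrable (llr μ ν) μ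
  · have h_nonneg := InformationTheory.integral_llr_add_sub_measure_univ_nonneg h.1 h.2
    rw [measureReal_def, measureReal_def, h_univ, add_sub_cancel_right] at h_nonneg
    rw [klDiv, if_pos h, InformationTheory.klDiv_of_ac_of_integrable h.1 h.2, measureReal_def,
      measureReal_def, h_univ, add_sub_cancel_right, EReal.coe_ennreal_ofReal,
      max_eq_left h_nonneg]
  · rw [klDiv, if_neg h, InformationTheory.klDiv_eq_top_iff.mpr fun hac hint ↦ h ⟨hac, hint⟩,
      EReal.coe_ennreal_top]

theorem kl_disintegration_general
    {X Y : Type*} [MeasurableSpace X] [MeasurableSpace Y] [StandardBorelSpace Y]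
    [Nonempty Y]
    (p q : Measure (X × Y)) [IsProbabilityMeasure p] [IsProbabilityMeasure q] :
    klDiv p q = klDiv p.fst q.fst + klDiv p (p.fst ⊗ₘ q.condKernel) := by
  have h_chain := InformationTheory.klDiv_compProd_eq_add p.fst q.fst p.condKernel q.condKernel
  rw [p.disintegrate p.condKernel, q.disintegrate q.condKernel] at h_chain
  simp only [klDiv_eq_coe_klDiv_of_measure_univ_eq (measure_univ.trans measure_univ.symm),
    h_chain, EReal.coe_ennreal_add]

/-- Disintegration identity for the KL divergence of joint measures:
for probability measures `p, q` on `X × Y` with `p ≪ q`, writing `q = q.fst ⊗ₘ q.condKernel`,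
one has `KL(p | q) = KL(p.fst | q.fst) + KL(p | p.fst ⊗ₘ q.condKernel)`. -/
theorem kl_disintegration
    {X Y : Type*} [MeasurableSpace X] [MeasurableSpace Y] [StandardBorelSpace Y]
    [Nonempty Y]
    (p q : Measure (X × Y)) [IsProbabilityMeasure p] [IsProbabilityMeasure q]
    (hpq : p ≪ q) :
    klDiv p q = klDiv p.fst q.fst + klDiv p (p.fst ⊗ₘ q.condKernel) :=
  kl_disintegration_general p q
end

section
/- Data processing inequality for marginals (relative smoothness of the Sinkhorn objective): for probability measures π̃, π on X × Y with p_X π̃ ≪ p_X π ≪ μ★, the functional F(π) = KL(p_X π | μ★) satisfies D_F(π̃|π) = KL(p_X π̃ | p_X π) ≥ 0 (so F is convex), and KL(p_X π̃ | p_X π) ≤ KL(π̃ | π) (so F is 1-smooth relative to the negative entropy). -/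
/-!
The chain rule `log (dπ̃ₓ/dμ★) = log (dπ̃ₓ/dπₓ) + log (dπₓ/dμ★)`, integrated against `π̃ₓ`, turns
the Bregman divergence of `F` into `KL(π̃ₓ | πₓ)`. Between measures of equal finite mass the
divergence `klDiv` agrees with Mathlib's `InformationTheory.klDiv`, whose nonnegativity and data
processing inequality (applied to the projection `Prod.fst`) give the remaining two claims.
-/

open MeasureTheory ProbabilityTheory

section

variable {α : Type*} [MeasurableSpace α]

lemma llr_ae_eq_llr_add_llr {κ ν μ : Measure α} [SigmaFinite κ] [SigmaFinite ν] [SigmaFinite μ]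
    (hκν : κ ≪ ν) (hνμ : ν ≪ μ) :
    llr κ μ =ᵐ[κ] llr κ ν + llr ν μ := by
  filter_upwards [(hκν.trans hνμ).ae_le (Measure.rnDeriv_mul_rnDeriv hκν),
    Measure.rnDeriv_pos hκν, hκν.ae_le (Measure.rnDeriv_pos hνμ),
    hκν.ae_le (Measure.rnDeriv_lt_top κ ν), (hκν.trans hνμ).ae_le (Measure.rnDeriv_lt_top ν μ)]
    with x hmul hpos_κν hpos_νμ hlt_κν hlt_νμ
  rw [Pi.add_apply, llr, llr, llr, ← hmul, Pi.mul_apply, ENNReal.toReal_mul, Real.log_mul]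
  · exact ENNReal.toReal_ne_zero.mpr ⟨hpos_κν.ne', hlt_κν.ne⟩
  · exact ENNReal.toReal_ne_zero.mpr ⟨hpos_νμ.ne', hlt_νμ.ne⟩

variable {κ ν μ : Measure α} [SigmaFinite κ] [SigmaFinite ν] [SigmaFinite μ]

lemma integrable_llr_of_integrable_llr_of_integrable_llr (hκν : κ ≪ ν) (hνμ : ν ≪ μ)
    (hκμ_int : Integrable (llr κ μ) κ) (hνμ_int : Integrable (llr ν μ) κ) :
    Integrable (llr κ ν) κ := by
  refine (hκμ_int.sub hνμ_int).congr ?_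
  filter_upwards [llr_ae_eq_llr_add_llr hκν hνμ] with x hx
  simp only [Pi.sub_apply, hx, Pi.add_apply, add_sub_cancel_right]

lemma integral_llr_eq_integral_llr_add_integral_llr (hκν : κ ≪ ν) (hνμ : ν ≪ μ)
    (hκν_int : Integrable (llr κ ν) κ) (hνμ_int : Integrable (llr ν μ) κ) :
    ∫ x, llr κ μ x ∂κ = ∫ x, llr κ ν x ∂κ + ∫ x, llr ν μ x ∂κ := by
  rw [← integral_add hκν_int hνμ_int]
  exact integral_congr_ae (llr_ae_eq_llr_add_llr hκν hνμ)

end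

section

variable {α : Type*} [MeasurableSpace α] {μ ν : Measure α}

lemma klDiv_of_ac_of_integrable (hμν : μ ≪ ν) (h_int : Integrable (llr μ ν) μ) :
    klDiv μ ν = ((∫ x, llr μ ν x ∂μ : ℝ) : EReal) := by
  rw [klDiv, if_pos ⟨hμν, h_int⟩]

lemma klDiv_eq_coe_klDiv [IsFiniteMeasure μ] [IsFiniteMeasure ν] (h_eq : μ Set.univ = ν Set.univ) :
    klDiv μ ν = (InformationTheory.klDiv μ ν : EReal) := by
  by_cases h : μ ≪ ν ∧ Integrable (llr μ ν) μ
  · obtain ⟨hμν, h_int⟩ := h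
    have h_gibbs := InformationTheory.integral_llr_add_sub_measure_univ_nonneg hμν h_int
    rw [measureReal_def, measureReal_def, h_eq, add_sub_cancel_right] at h_gibbs
    rw [klDiv_of_ac_of_integrable hμν h_int, InformationTheory.klDiv_of_ac_of_integrable hμν h_int,
      measureReal_def, measureReal_def, h_eq, add_sub_cancel_right, EReal.coe_ennreal_ofReal,
      max_eq_left h_gibbs]
  · rw [klDiv, if_neg h, InformationTheory.klDiv_eq_top_iff.mpr fun hμν h_int ↦ h ⟨hμν, h_int⟩]
    rfl

lemma klDiv_nonneg [IsFiniteMeasure μ] [IsFiniteMeasure ν] (h_eq : μ Set.univ = ν Set.univ) :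
    0 ≤ klDiv μ ν := by
  rw [klDiv_eq_coe_klDiv h_eq]
  exact EReal.coe_ennreal_nonneg _

lemma klDiv_map_le [IsFiniteMeasure μ] [IsFiniteMeasure ν] (h_eq : μ Set.univ = ν Set.univ)
    {β : Type*} [MeasurableSpace β] {g : α → β} (hg : Measurable g) :
    klDiv (μ.map g) (ν.map g) ≤ klDiv μ ν := by
  have h_eq_map : μ.map g Set.univ = ν.map g Set.univ := by
    rw [Measure.map_apply hg MeasurableSet.univ, Measure.map_apply hg MeasurableSet.univ,
      Set.preimage_univ, h_eq]
  rw [klDiv_eq_coe_klDiv h_eq, klDiv_eq_coe_klDiv h_eq_map]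
  exact EReal.coe_ennreal_le_coe_ennreal_iff.mpr (InformationTheory.klDiv_map_le μ ν hg)

end

/-- Data processing inequality for first marginals; relative smoothness of the
Sinkhorn objective: for probability measures `pt, p` on `X × Y` with
`p_X pt ≪ p_X p ≪ μs`, the objective `F(π) = KL(p_X π | μs)` (with first variation
`log(d p_X π / d μs)` at `p`) satisfies
`D_F(pt|p) = F(pt) − F(p) − ∫ log(d p_X p/d μs) d(p_X pt − p_X p) = KL(p_X pt | p_X p) ≥ 0`
(so `F` is convex) and `KL(p_X pt | p_X p) ≤ KL(pt | p)` (so `F` is 1-smooth relative to the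
negative entropy). -/
theorem sinkhorn_objective_relative_smoothness
    {X Y : Type*} [MeasurableSpace X] [MeasurableSpace Y]
    (μs : Measure X) [IsProbabilityMeasure μs]
    (p pt : Measure (X × Y)) [IsProbabilityMeasure p] [IsProbabilityMeasure pt]
    (h1 : pt.fst ≪ p.fst) (h2 : p.fst ≪ μs)
    (hint1 : Integrable (llr p.fst μs) p.fst)
    (hint2 : Integrable (llr pt.fst μs) pt.fst)
    (hint3 : Integrable (llr p.fst μs) pt.fst) :
    klDiv pt.fst μs - klDiv p.fst μs
        - (((∫ x, llr p.fst μs x ∂pt.fst) - (∫ x, llr p.fst μs x ∂p.fst) : ℝ) : EReal)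
      = klDiv pt.fst p.fst ∧
    (0 : EReal) ≤ klDiv pt.fst p.fst ∧
    klDiv pt.fst p.fst ≤ klDiv pt p := by
  have h_int := integrable_llr_of_integrable_llr_of_integrable_llr h1 h2 hint2 hint3
  have h_chain := integral_llr_eq_integral_llr_add_integral_llr h1 h2 h_int hint3
  refine ⟨?_, klDiv_nonneg (by simp), klDiv_map_le (by simp) measurable_fst⟩
  rw [klDiv_of_ac_of_integrable (h1.trans h2) hint2, klDiv_of_ac_of_integrable h2 hint1,
    klDiv_of_ac_of_integrable h1 h_int, h_chain]
  norm_cast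
  ring
end

section
/- Soft c-transform oscillation bound: let ν be a probability measure on Y, g ∈ L∞(Y), c bounded measurable on X × Y, ε > 0, and define f(x) = −ε log ∫_Y exp((g(y) − c(x,y))/ε) ν(dy). Then for all x, x' ∈ X and y ∈ Y: f(x') − f(x) + c(x,y) − c(x',y) ≤ 2·D_c, where D_c = (1/2)·sup_{x,x',y,y'} [c(x,y) + c(x',y') − c(x,y') − c(x',y)]. -/
open MeasureTheory Real

/-- Soft c-transform oscillation bound: let `ν` be a probability measure on
`Y`, `g` bounded measurable on `Y`, `c` bounded measurable on `X × Y`, `ε > 0`, and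
`f(x) = −ε log ∫ exp((g(y) − c(x,y))/ε) dν(y)`. If `Dc` bounds half the twist,
i.e. `c(x,y) + c(x',y') − c(x,y') − c(x',y) ≤ 2·Dc` for all `x, x', y, y'`, then
`f(x') − f(x) + c(x,y) − c(x',y) ≤ 2·Dc` for all `x, x', y`. -/
theorem soft_c_transform_oscillation_bound
    {X Y : Type*} [MeasurableSpace X] [MeasurableSpace Y]
    (ν : Measure Y) [IsProbabilityMeasure ν]
    (c : X → Y → ℝ) (hc_meas : Measurable (Function.uncurry c))
    (Mc : ℝ) (hc_bdd : ∀ x y, |c x y| ≤ Mc)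
    (g : Y → ℝ) (hg_meas : Measurable g)
    (Mg : ℝ) (hg_bdd : ∀ y, |g y| ≤ Mg)
    (ε : ℝ) (hε : 0 < ε)
    (Dc : ℝ)
    (hDc : ∀ x x' y y', c x y + c x' y' - c x y' - c x' y ≤ 2 * Dc)
    (f : X → ℝ)
    (hf : ∀ x, f x = -ε * log (∫ y, exp ((g y - c x y) / ε) ∂ν)) :
    ∀ x x' y, f x' - f x + c x y - c x' y ≤ 2 * Dc := by
  intro x x' y0
  set h : X → Y → ℝ := fun x y => exp ((g y - c x y) / ε) with hh
  have hmeas : ∀ x, Measurable (h x) := by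
    intro x
    exact ((hg_meas.sub ((hc_meas.comp (measurable_const.prodMk measurable_id)))).div_const
      ε).exp
  have hint : ∀ x, Integrable (h x) ν := by
    intro x
    refine Integrable.mono' (integrable_const (exp ((Mg + Mc) / ε))) (hmeas x).aestronglyMeasurable ?_
    filter_upwards with y
    rw [norm_of_nonneg (exp_nonneg _)]
    apply exp_le_exp.mpr
    apply div_le_div_of_nonneg_right _ hε.le
    have := abs_le.1 (hg_bdd y)
    have := abs_le.1 (hc_bdd x y)
    linarith
  have hpos : ∀ x, 0 < ∫ y, h x y ∂ν := by
    intro x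
    have : exp (-(Mg + Mc) / ε) ≤ ∫ y, h x y ∂ν := by
      have : ∫ (_ : Y), exp (-(Mg + Mc) / ε) ∂ν ≤ ∫ y, h x y ∂ν := by
        refine integral_mono (integrable_const _) (hint x) ?_
        intro y
        apply exp_le_exp.mpr
        apply div_le_div_of_nonneg_right _ hε.le
        have := abs_le.1 (hg_bdd y)
        have := abs_le.1 (hc_bdd x y)
        linarith
      simpa using this
    exact lt_of_lt_of_le (exp_pos _) this
  set k : ℝ := exp ((c x y0 - c x' y0 - 2 * Dc) / ε) with hk
  have key : k * ∫ y, h x y ∂ν ≤ ∫ y, h x' y ∂ν := by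
    rw [← integral_const_mul]
    refine integral_mono ((hint x).const_mul k) (hint x') ?_
    intro y
    rw [hk, hh]
    simp only
    rw [← exp_add, ← add_div]
    apply exp_le_exp.mpr
    apply div_le_div_of_nonneg_right _ hε.le
    have := hDc x' x y y0
    linarith
  have hlog : log k + log (∫ y, h x y ∂ν) ≤ log (∫ y, h x' y ∂ν) := by
    rw [← Real.log_mul (ne_of_gt (exp_pos _)) (ne_of_gt (hpos x))]
    exact Real.log_le_log (mul_pos (exp_pos _) (hpos x)) key
  rw [hk, Real.log_exp] at hlog
  rw [hf x, hf x']
  have hε' : ε ≠ 0 := ne_of_gt hε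
  nlinarith [mul_le_mul_of_nonneg_left hlog (le_of_lt hε), mul_div_cancel₀ (c x y0 - c x' y0 - 2 * Dc) hε']
end

section
/- Stability of the soft c-transform in the oscillation seminorm: with D_c as above and f = T_ν(g) for some g ∈ L∞(Y), and μ, μ̃ probability measures on X, define T_μ(f)(y) = −ε log ∫_X exp((f(x) − c(x,y))/ε) μ(dx). Then the oscillation seminorm ‖h‖_var := sup h − inf h satisfies ‖T_μ̃(f) − T_μ(f)‖_var ≤ 2ε·e^{2D_c/ε}·‖μ − μ̃‖_TV. -/
/-! The difference `T_μ̃ f (y) - T_μ f (y)` is `ε` times a difference of logarithms of the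
integrals of one function `exp ((f - c(·, y)) / ε)` against `μ` and `μ̃`. Since `f` is itself a
soft `c`-transform, `x ↦ f x - c x y` oscillates by at most `2 D_c`, so with `s` its supremum the
integrand lies in `[e^{(s - 2D_c)/ε}, e^{s/ε}]`. The two integrals therefore differ by at most
`e^{s/ε} ‖μ - μ̃‖_TV` and are both at least `e^{(s - 2D_c)/ε}`, and `log` is `1/L`-Lipschitz on
`[L, ∞)`. -/

open MeasureTheory Real

/- The oscillation seminorm `‖h‖_var = sup h − inf h`. -/
noncomputable def oscVar {α : Type*} (h : α → ℝ) : ℝ :=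
  sSup (Set.range h) - sInf (Set.range h)

/- `|μ - ν|(univ)`, without the factor `1/2` of the probabilistic convention. -/
noncomputable def tvDist {α : Type*} [MeasurableSpace α]
    (μ ν : Measure α) [IsFiniteMeasure μ] [IsFiniteMeasure ν] : ℝ :=
  ((μ.toSignedMeasure - ν.toSignedMeasure).totalVariation Set.univ).toReal

namespace MeasureTheory.Measure

theorem add_sub_eq_add_sub {α : Type*} [MeasurableSpace α] (μ ν : Measure α)
    [IsFiniteMeasure μ] [IsFiniteMeasure ν] : μ + (ν - μ) = ν + (μ - ν) := by
  have h := sub_toSignedMeasure_eq_toSignedMeasure_sub (μ := μ) (ν := ν)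
  rw [sub_eq_sub_iff_add_eq_add] at h
  rw [← toSignedMeasure_eq_toSignedMeasure_iff, toSignedMeasure_add, toSignedMeasure_add, h,
    add_comm]

end MeasureTheory.Measure

section TotalVariation

variable {α : Type*} [MeasurableSpace α] (μ ν : Measure α) [IsFiniteMeasure μ] [IsFiniteMeasure ν]

theorem tvDist_eq_sub_add_sub : tvDist μ ν = (μ - ν).real Set.univ + (ν - μ).real Set.univ := by
  simp [tvDist, SignedMeasure.totalVariation, Measure.jordanDecompositionOfToSignedMeasureSub,
    measureReal_def, ENNReal.toReal_add]

theorem tvDist_comm : tvDist μ ν = tvDist ν μ := by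
  rw [tvDist_eq_sub_add_sub, tvDist_eq_sub_add_sub, add_comm]

variable {μ ν} {φ : α → ℝ} {C : ℝ}

theorem integral_sub_integral_le_mul_tvDist (hφ : Measurable φ) (h0 : ∀ a, 0 ≤ φ a)
    (hC : ∀ a, φ a ≤ C) : ∫ a, φ a ∂μ - ∫ a, φ a ∂ν ≤ C * tvDist μ ν := by
  rcases isEmpty_or_nonempty α with _ | ⟨⟨a₀⟩⟩
  · simp [tvDist_eq_sub_add_sub, Measure.eq_zero_of_isEmpty μ, Measure.eq_zero_of_isEmpty ν]
  have hint : ∀ (m : Measure α) [IsFiniteMeasure m], Integrable φ m := fun m _ =>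
    .of_bound hφ.aestronglyMeasurable C (ae_of_all _ fun a => by
      rw [Real.norm_of_nonneg (h0 a)]; exact hC a)
  have hsub : ∫ a, φ a ∂(μ - ν) ≤ C * (μ - ν).real Set.univ := by
    calc ∫ a, φ a ∂(μ - ν) ≤ ∫ _, C ∂(μ - ν) := integral_mono (hint _) (integrable_const C) hC
      _ = C * (μ - ν).real Set.univ := by rw [integral_const, smul_eq_mul, mul_comm]
  have hν : ∫ a, φ a ∂μ ≤ ∫ a, φ a ∂ν + ∫ a, φ a ∂(μ - ν) := by
    calc ∫ a, φ a ∂μ ≤ ∫ a, φ a ∂(μ + (ν - μ)) :=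
          integral_mono_measure (Measure.le_add_right le_rfl) (ae_of_all _ h0) (hint _)
      _ = ∫ a, φ a ∂ν + ∫ a, φ a ∂(μ - ν) := by
          rw [Measure.add_sub_eq_add_sub, integral_add_measure (hint _) (hint _)]
  have hC0 : 0 ≤ C := (h0 a₀).trans (hC a₀)
  rw [tvDist_eq_sub_add_sub]
  nlinarith [measureReal_nonneg (μ := ν - μ) (s := Set.univ)]

theorem abs_integral_sub_integral_le_mul_tvDist (hφ : Measurable φ) (h0 : ∀ a, 0 ≤ φ a)
    (hC : ∀ a, φ a ≤ C) : |∫ a, φ a ∂μ - ∫ a, φ a ∂ν| ≤ C * tvDist μ ν :=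
  abs_sub_le_iff.2 ⟨integral_sub_integral_le_mul_tvDist hφ h0 hC,
    tvDist_comm μ ν ▸ integral_sub_integral_le_mul_tvDist hφ h0 hC⟩

end TotalVariation

theorem oscVar_le_of_abs_le {α : Type*} [Nonempty α] {h : α → ℝ} {K : ℝ}
    (hK : ∀ a, |h a| ≤ K) : oscVar h ≤ 2 * K := by
  have hsup : sSup (Set.range h) ≤ K :=
    csSup_le (Set.range_nonempty h) (by rintro _ ⟨a, rfl⟩; exact (abs_le.1 (hK a)).2)
  have hinf : -K ≤ sInf (Set.range h) :=
    le_csInf (Set.range_nonempty h) (by rintro _ ⟨a, rfl⟩; exact (abs_le.1 (hK a)).1)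
  unfold oscVar
  linarith

theorem Real.abs_log_sub_log_le_div {a b L : ℝ} (hL : 0 < L) (ha : L ≤ a) (hb : L ≤ b) :
    |log a - log b| ≤ |a - b| / L := by
  have key : ∀ {u v : ℝ}, L ≤ u → L ≤ v → log u - log v ≤ |u - v| / L := by
    intro u v hu hv
    have hv0 : 0 < v := hL.trans_le hv
    calc log u - log v = log (u / v) := (log_div (hL.trans_le hu).ne' hv0.ne').symm
      _ ≤ u / v - 1 := log_le_sub_one_of_pos (div_pos (hL.trans_le hu) hv0)
      _ = (u - v) / v := by field_simp
      _ ≤ |u - v| / v := by gcongr; exact le_abs_self _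
      _ ≤ |u - v| / L := by gcongr
  exact abs_sub_le_iff.2 ⟨key ha hb, abs_sub_comm a b ▸ key hb ha⟩

theorem integrable_exp_of_le {α : Type*} [MeasurableSpace α] {μ : Measure α} [IsFiniteMeasure μ]
    {ψ : α → ℝ} (hψ : Measurable ψ) {M : ℝ} (hM : ∀ a, ψ a ≤ M) :
    Integrable (fun a => exp (ψ a)) μ :=
  .of_bound (measurable_exp.comp hψ).aestronglyMeasurable (exp M) (ae_of_all _ fun a => by
    rw [Real.norm_of_nonneg (exp_pos _).le]; exact exp_le_exp.2 (hM a))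

section SoftMax

variable {α : Type*} [MeasurableSpace α] {ε : ℝ}

/-- The soft `c`-transform `T_μ f` is `y ↦ -softMax ε μ (fun x => f x - c x y)`. -/
noncomputable def softMax (ε : ℝ) (μ : Measure α) (φ : α → ℝ) : ℝ :=
  ε * log (∫ a, exp (φ a / ε) ∂μ)

theorem softMax_le_softMax_add (hε : 0 < ε) {μ : Measure α} [NeZero μ] {φ ψ : α → ℝ} {k : ℝ}
    (hφ : Integrable (fun a => exp (φ a / ε)) μ) (hψ : Integrable (fun a => exp (ψ a / ε)) μ)
    (h : ∀ a, φ a ≤ ψ a + k) : softMax ε μ φ ≤ softMax ε μ ψ + k := by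
  have hI : ∫ a, exp (φ a / ε) ∂μ ≤ exp (k / ε) * ∫ a, exp (ψ a / ε) ∂μ := by
    rw [← integral_const_mul]
    refine integral_mono hφ (hψ.const_mul _) fun a => ?_
    rw [← exp_add, ← add_div]
    gcongr
    linarith [h a]
  have hlog : log (∫ a, exp (φ a / ε) ∂μ) ≤ k / ε + log (∫ a, exp (ψ a / ε) ∂μ) := by
    rw [← log_exp (k / ε), ← log_mul (exp_pos _).ne' (integral_exp_pos hψ).ne']
    exact log_le_log (integral_exp_pos hφ) hI
  unfold softMax
  have := mul_le_mul_of_nonneg_left hlog hε.le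
  rwa [mul_add, mul_div_cancel₀ _ hε.ne', add_comm] at this

theorem abs_softMax_sub_softMax_le (hε : 0 < ε) {μ ν : Measure α} [IsProbabilityMeasure μ]
    [IsProbabilityMeasure ν] {φ : α → ℝ} (hφ : Measurable φ) {D : ℝ}
    (hD : ∀ a b, φ a - φ b ≤ D) :
    |softMax ε μ φ - softMax ε ν φ| ≤ ε * exp (D / ε) * tvDist μ ν := by
  have := nonempty_of_isProbabilityMeasure μ
  have hbdd : BddAbove (Set.range φ) :=
    ⟨φ (Classical.arbitrary α) + D, by rintro _ ⟨a, rfl⟩; linarith [hD a (Classical.arbitrary α)]⟩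
  set s := ⨆ a, φ a
  have hle : ∀ a, φ a / ε ≤ s / ε := fun a => by gcongr; exact le_ciSup hbdd a
  have hge : ∀ a, (s - D) / ε ≤ φ a / ε := fun a => by
    gcongr
    linarith [ciSup_le fun b => (by linarith [hD b a] : φ b ≤ φ a + D)]
  have hmeas : Measurable fun a => φ a / ε := hφ.div_const ε
  have hlow : ∀ (m : Measure α) [IsProbabilityMeasure m],
      exp ((s - D) / ε) ≤ ∫ a, exp (φ a / ε) ∂m := fun m _ => by
    simpa using integral_mono (μ := m) (integrable_const _) (integrable_exp_of_le hmeas hle)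
      fun a => exp_le_exp.2 (hge a)
  calc |softMax ε μ φ - softMax ε ν φ|
      = ε * |log (∫ a, exp (φ a / ε) ∂μ) - log (∫ a, exp (φ a / ε) ∂ν)| := by
        rw [softMax, softMax, ← mul_sub, abs_mul, abs_of_pos hε]
    _ ≤ ε * (|∫ a, exp (φ a / ε) ∂μ - ∫ a, exp (φ a / ε) ∂ν| / exp ((s - D) / ε)) := by
        gcongr
        exact Real.abs_log_sub_log_le_div (exp_pos _) (hlow μ) (hlow ν)
    _ ≤ ε * (exp (s / ε) * tvDist μ ν / exp ((s - D) / ε)) := by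
        gcongr
        exact abs_integral_sub_integral_le_mul_tvDist (measurable_exp.comp hmeas)
          (fun a => (exp_pos _).le) fun a => exp_le_exp.2 (hle a)
    _ = ε * exp (D / ε) * tvDist μ ν := by
        rw [mul_div_right_comm, ← exp_sub, sub_div, sub_sub_cancel]
        ring

end SoftMax

theorem neg_softMax_sub_cost_sub_le {X Y : Type*} [MeasurableSpace Y] {ε : ℝ} (hε : 0 < ε)
    (ν : Measure Y) [NeZero ν] {c : X → Y → ℝ} {g : Y → ℝ} {D : ℝ}
    (hint : ∀ x, Integrable (fun y => exp ((g y - c x y) / ε)) ν)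
    (hD : ∀ x x' y y', c x y + c x' y' - c x y' - c x' y ≤ D) (x x' : X) (y : Y) :
    (-softMax ε ν (fun y' => g y' - c x y') - c x y)
      - (-softMax ε ν (fun y' => g y' - c x' y') - c x' y) ≤ D := by
  have := softMax_le_softMax_add hε (hint x') (hint x) (k := c x y - c x' y + D) fun y' => by
    linarith [hD x' x y y']
  linarith

theorem soft_c_transform_stability_general
    {X Y : Type*} [MeasurableSpace X] [MeasurableSpace Y] [Nonempty Y]
    (ν : Measure Y) [IsProbabilityMeasure ν]
    (μ μt : Measure X) [IsProbabilityMeasure μ] [IsProbabilityMeasure μt]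
    (c : X → Y → ℝ) (hc_meas : Measurable (Function.uncurry c))
    (Mc : ℝ) (hc_bdd : ∀ x y, |c x y| ≤ Mc)
    (g : Y → ℝ) (hg_meas : Measurable g)
    (Mg : ℝ) (hg_bdd : ∀ y, |g y| ≤ Mg)
    (ε : ℝ) (hε : 0 < ε)
    (Dc : ℝ)
    (hDc : ∀ x x' y y', c x y + c x' y' - c x y' - c x' y ≤ 2 * Dc)
    (f : X → ℝ) (hf_meas : Measurable f)
    (hf : ∀ x, f x = -ε * log (∫ y, exp ((g y - c x y) / ε) ∂ν)) :
    oscVar (fun y =>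
        (-ε * log (∫ x, exp ((f x - c x y) / ε) ∂μt))
          - (-ε * log (∫ x, exp ((f x - c x y) / ε) ∂μ)))
      ≤ 2 * ε * exp (2 * Dc / ε) * tvDist μ μt := by
  have hint : ∀ x, Integrable (fun y => exp ((g y - c x y) / ε)) ν := fun x =>
    integrable_exp_of_le ((hg_meas.sub hc_meas.of_uncurry_left).div_const ε)
      (M := (Mg + Mc) / ε) fun y => by
        gcongr
        linarith [abs_le.1 (hg_bdd y), abs_le.1 (hc_bdd x y)]
  have hosc : ∀ y x x', (f x - c x y) - (f x' - c x' y) ≤ 2 * Dc := fun y x x' => by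
    simp only [hf, neg_mul]
    exact neg_softMax_sub_cost_sub_le hε ν hint hDc x x' y
  have hstab : ∀ y, |-ε * log (∫ x, exp ((f x - c x y) / ε) ∂μt)
      - -ε * log (∫ x, exp ((f x - c x y) / ε) ∂μ)| ≤ ε * exp (2 * Dc / ε) * tvDist μ μt :=
    fun y => by
      simp only [neg_mul, neg_sub_neg]
      exact abs_softMax_sub_softMax_le hε (hf_meas.sub hc_meas.of_uncurry_right) (hosc y)
  calc _ ≤ 2 * (ε * exp (2 * Dc / ε) * tvDist μ μt) := oscVar_le_of_abs_le hstab
    _ = 2 * ε * exp (2 * Dc / ε) * tvDist μ μt := by ring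

/-- Stability of the soft c-transform in the oscillation seminorm: with
`Dc` bounding half the twist of the bounded cost `c`, `f = T_ν g` a soft `c`-transform,
and `T_μ(f)(y) = −ε log ∫ exp((f(x) − c(x,y))/ε) dμ(x)`, one has
`‖T_μ̃(f) − T_μ(f)‖_var ≤ 2ε·e^{2Dc/ε}·‖μ − μ̃‖_TV`. -/
theorem soft_c_transform_stability
    {X Y : Type*} [MeasurableSpace X] [MeasurableSpace Y] [Nonempty X] [Nonempty Y]
    (ν : Measure Y) [IsProbabilityMeasure ν]
    (μ μt : Measure X) [IsProbabilityMeasure μ] [IsProbabilityMeasure μt]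
    (c : X → Y → ℝ) (hc_meas : Measurable (Function.uncurry c))
    (Mc : ℝ) (hc_bdd : ∀ x y, |c x y| ≤ Mc)
    (g : Y → ℝ) (hg_meas : Measurable g)
    (Mg : ℝ) (hg_bdd : ∀ y, |g y| ≤ Mg)
    (ε : ℝ) (hε : 0 < ε)
    (Dc : ℝ)
    (hDc : ∀ x x' y y', c x y + c x' y' - c x y' - c x' y ≤ 2 * Dc)
    (f : X → ℝ) (hf_meas : Measurable f)
    (hf : ∀ x, f x = -ε * log (∫ y, exp ((g y - c x y) / ε) ∂ν)) :
    oscVar (fun y =>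
        (-ε * log (∫ x, exp ((f x - c x y) / ε) ∂μt))
          - (-ε * log (∫ x, exp ((f x - c x y) / ε) ∂μ)))
      ≤ 2 * ε * exp (2 * Dc / ε) * tvDist μ μt :=
  soft_c_transform_stability_general ν μ μt c hc_meas Mc hc_bdd g hg_meas Mg hg_bdd ε hε Dc hDc f
    hf_meas hf
end

section
/- Relative smoothness of squared MMD with respect to negative entropy: let k be a bounded positive semi-definite kernel on X with c_k = sup_x k(x,x) < ∞, and for probability measures μ, ν define MMD²(μ,ν) = ∬ k d(μ−ν)d(μ−ν). Then for all probability measures μ, ν: ⟨∇MMD²(μ,ν★) − ∇MMD²(ν,ν★), μ − ν⟩ = 2∬k d(μ−ν)d(μ−ν) ≤ 2c_k·‖μ−ν‖²_TV ≤ 4c_k·(KL(μ|ν) + KL(ν|μ)); hence MMD²(·,ν★) is 4c_k-smooth relative to the negative entropy. -/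
open MeasureTheory ProbabilityTheory Real

/-!
By symmetry of `k`, the bracket is `2 ∬ k d(μ - ν) d(μ - ν)`. Writing `μ - ν = ρ⁺ - ρ⁻` (Jordan
decomposition, `‖μ - ν‖_TV = ρ⁺(X) + ρ⁻(X)`), every measurable `g` with `|g| ≤ C` satisfies
`|∫ g d(μ - ν)| ≤ C ‖μ - ν‖_TV`; applied to the inner and then the outer integral, with
`|k| ≤ c_k` from positive semidefiniteness on two points, this gives the `c_k ‖μ - ν‖²_TV` bound.

For the entropy bound let `f = dμ/dν`, so that `KL(μ|ν) + KL(ν|μ) = ∫ (f - 1) log f dν` and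
`‖μ - ν‖_TV ≤ ∫ |f - 1| dν`. The logarithmic mean is at most the arithmetic mean, i.e.
`(t - 1)² ≤ (t - 1) log t · (t + 1) / 2`, and Cauchy–Schwarz against `∫ (f + 1) / 2 dν = 1`
gives `(∫ |f - 1| dν)² ≤ ∫ (f - 1) log f dν`.
-/

lemma Real.sq_sub_one_le_sub_one_mul_log_mul (t : ℝ) (ht : 0 < t) :
    (t - 1) ^ 2 ≤ (t - 1) * log t * ((t + 1) / 2) := by
  rcases le_total 1 t with h | h
  · have hlog : 2 * (t - 1) / (t + 1) ≤ log t := by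
      simpa [show t - 1 + 2 = t + 1 by ring] using le_log_one_add_of_nonneg (sub_nonneg.2 h)
    rw [div_le_iff₀ (by linarith)] at hlog
    nlinarith
  · have hlog : 2 * (t⁻¹ - 1) / (t⁻¹ + 1) ≤ -log t := by
      simpa [show t⁻¹ - 1 + 2 = t⁻¹ + 1 by ring] using
        le_log_one_add_of_nonneg (sub_nonneg.2 (one_le_inv₀ ht |>.2 h))
    rw [show 2 * (t⁻¹ - 1) / (t⁻¹ + 1) = 2 * (1 - t) / (1 + t) by field_simp,
      div_le_iff₀ (by linarith)] at hlog
    nlinarith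

lemma Real.sub_one_mul_log_nonneg {t : ℝ} (ht : 0 ≤ t) : 0 ≤ (t - 1) * log t := by
  rcases le_total 1 t with h | h
  · exact mul_nonneg (sub_nonneg.2 h) (log_nonneg h)
  · exact mul_nonneg_of_nonpos_of_nonpos (sub_nonpos.2 h) (log_nonpos ht h)

def IsPosSemidefKernel {X : Type*} (k : X → X → ℝ) : Prop :=
  ∀ (n : ℕ) (x : Fin n → X) (a : Fin n → ℝ), 0 ≤ ∑ i, ∑ j, a i * a j * k (x i) (x j)

lemma IsPosSemidefKernel.abs_apply_le {X : Type*} {k : X → X → ℝ} (hk : IsPosSemidefKernel k)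
    (hk_symm : ∀ x y, k x y = k y x) {c : ℝ} (hc : ∀ x, k x x ≤ c) (x y : X) : |k x y| ≤ c := by
  have h_sum := hk 2 ![x, y] ![1, 1]
  have h_diff := hk 2 ![x, y] ![1, -1]
  simp only [Fin.sum_univ_two, Matrix.cons_val_zero, Matrix.cons_val_one] at h_sum h_diff
  rw [hk_symm y x] at h_sum h_diff
  rw [abs_le]
  constructor <;> linarith [hc x, hc y]

section TotalVariation

open Set

variable {X : Type*} [MeasurableSpace X] {μ ν : Measure X} [IsFiniteMeasure μ] [IsFiniteMeasure ν]

variable (μ ν) in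
lemma exists_add_eq_add_and_tvDist_eq :
    ∃ ρ₁ ρ₂ : Measure X, IsFiniteMeasure ρ₁ ∧ IsFiniteMeasure ρ₂ ∧ ρ₁ ⟂ₘ ρ₂ ∧
      μ + ρ₂ = ν + ρ₁ ∧ tvDist μ ν = ρ₁.real univ + ρ₂.real univ := by
  set j := (μ.toSignedMeasure - ν.toSignedMeasure).toJordanDecomposition with hj
  refine ⟨j.posPart, j.negPart, inferInstance, inferInstance, j.mutuallySingular, ?_, ?_⟩
  · have hs : j.posPart.toSignedMeasure - j.negPart.toSignedMeasure =
        μ.toSignedMeasure - ν.toSignedMeasure :=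
      SignedMeasure.toSignedMeasure_toJordanDecomposition _
    rw [← Measure.toSignedMeasure_eq_toSignedMeasure_iff, Measure.toSignedMeasure_add,
      Measure.toSignedMeasure_add]
    rw [sub_eq_sub_iff_add_eq_add] at hs
    rw [← hs, add_comm]
  · rw [tvDist, SignedMeasure.totalVariation, ← hj, Measure.add_apply,
      ENNReal.toReal_add (measure_ne_top _ _) (measure_ne_top _ _)]
    rfl

lemma abs_integral_sub_integral_le_mul_tvDist_s18 {g : X → ℝ} (hg : Measurable g) {C : ℝ}
    (hgC : ∀ x, |g x| ≤ C) : |∫ x, g x ∂μ - ∫ x, g x ∂ν| ≤ C * tvDist μ ν := by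
  obtain ⟨ρ₁, ρ₂, _, _, -, hadd, htv⟩ := exists_add_eq_add_and_tvDist_eq μ ν
  have hint : ∀ (ρ : Measure X) [IsFiniteMeasure ρ], Integrable g ρ := fun ρ _ ↦
    .of_bound hg.aestronglyMeasurable C (.of_forall hgC)
  have hbound : ∀ (ρ : Measure X) [IsFiniteMeasure ρ], |∫ x, g x ∂ρ| ≤ C * ρ.real univ :=
    fun ρ _ ↦ norm_integral_le_of_norm_le_const (μ := ρ) (f := g) (.of_forall hgC)
  have htransfer : ∫ x, g x ∂μ - ∫ x, g x ∂ν = ∫ x, g x ∂ρ₁ - ∫ x, g x ∂ρ₂ := by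
    have h := congrArg (fun ρ ↦ ∫ x, g x ∂ρ) hadd
    simp only [integral_add_measure (hint _) (hint _)] at h
    linarith
  calc |∫ x, g x ∂μ - ∫ x, g x ∂ν| ≤ |∫ x, g x ∂ρ₁| + |∫ x, g x ∂ρ₂| := htransfer ▸ abs_sub _ _
    _ ≤ C * tvDist μ ν := by rw [htv, mul_add]; exact add_le_add (hbound ρ₁) (hbound ρ₂)

variable (μ ν) in
lemma exists_measurableSet_tvDist_eq :
    ∃ A, MeasurableSet A ∧
      tvDist μ ν = (μ.real A - ν.real A) + (ν.real Aᶜ - μ.real Aᶜ) := by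
  obtain ⟨ρ₁, ρ₂, _, _, ⟨S, hS, hρ₁S, hρ₂S⟩, hadd, htv⟩ := exists_add_eq_add_and_tvDist_eq μ ν
  have happly : ∀ B, μ.real B + ρ₂.real B = ν.real B + ρ₁.real B := fun B ↦ by
    simpa [measureReal_def, ENNReal.toReal_add] using congrArg (fun ρ ↦ ρ.real B) hadd
  refine ⟨Sᶜ, hS.compl, ?_⟩
  have h₁ : ρ₁.real S = 0 := by simp [measureReal_def, hρ₁S]
  have h₂ : ρ₂.real Sᶜ = 0 := by simp [measureReal_def, hρ₂S]
  rw [compl_compl, htv, ← measureReal_add_measureReal_compl (μ := ρ₁) hS,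
    ← measureReal_add_measureReal_compl (μ := ρ₂) hS]
  linarith [happly S, happly Sᶜ]

lemma tvDist_le_integral_abs_toReal_rnDeriv_sub_one (hμν : μ ≪ ν) :
    tvDist μ ν ≤ ∫ x, |(μ.rnDeriv ν x).toReal - 1| ∂ν := by
  obtain ⟨A, hA, htv⟩ := exists_measurableSet_tvDist_eq μ ν
  set f := fun x ↦ (μ.rnDeriv ν x).toReal
  have hf : Integrable f ν := Measure.integrable_toReal_rnDeriv
  have hset : ∀ B, μ.real B - ν.real B = ∫ x in B, (f x - 1) ∂ν := fun B ↦ by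
    rw [integral_sub hf.integrableOn (integrable_const 1), Measure.setIntegral_toReal_rnDeriv hμν,
      setIntegral_const, smul_eq_mul, mul_one]
  calc tvDist μ ν = ∫ x in A, (f x - 1) ∂ν + -∫ x in Aᶜ, (f x - 1) ∂ν := by
        rw [htv, ← hset, ← hset, neg_sub]
    _ ≤ ∫ x in A, |f x - 1| ∂ν + ∫ x in Aᶜ, |f x - 1| ∂ν :=
        add_le_add ((le_abs_self _).trans abs_integral_le_integral_abs)
          ((neg_le_abs _).trans abs_integral_le_integral_abs)
    _ = ∫ x, |f x - 1| ∂ν := integral_add_compl hA (hf.sub (integrable_const 1)).abs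

end TotalVariation

section CauchySchwarz

variable {X : Type*} [MeasurableSpace X] {μ : Measure X} {a b : X → ℝ}

lemma MeasureTheory.Integrable.sqrt_mul_sqrt (ha : Integrable a μ) (hb : Integrable b μ) :
    Integrable (fun x ↦ √(a x) * √(b x)) μ := by
  refine ((ha.abs.add hb.abs).div_const 2).mono'
    ((continuous_sqrt.comp_aestronglyMeasurable ha.1).mul
      (continuous_sqrt.comp_aestronglyMeasurable hb.1)) (.of_forall fun x ↦ ?_)
  rw [Real.norm_of_nonneg (by positivity)]
  have hsa : √(a x) ^ 2 ≤ |a x| := by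
    rcases le_total 0 (a x) with h | h
    · rw [sq_sqrt h, abs_of_nonneg h]
    · simp [sqrt_eq_zero'.2 h]
  have hsb : √(b x) ^ 2 ≤ |b x| := by
    rcases le_total 0 (b x) with h | h
    · rw [sq_sqrt h, abs_of_nonneg h]
    · simp [sqrt_eq_zero'.2 h]
  simp only [Pi.add_apply]
  nlinarith [sq_nonneg (√(a x) - √(b x))]

lemma integral_sqrt_mul_sqrt_le (ha0 : 0 ≤ᵐ[μ] a) (hb0 : 0 ≤ᵐ[μ] b) (ha : Integrable a μ)
    (hb : Integrable b μ) :
    ∫ x, √(a x) * √(b x) ∂μ ≤ √(∫ x, a x ∂μ) * √(∫ x, b x ∂μ) := by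
  have hmemLp : ∀ g : X → ℝ, 0 ≤ᵐ[μ] g → Integrable g μ →
      MemLp (fun x ↦ √(g x)) (ENNReal.ofReal 2) μ := fun g hg0 hg ↦ by
    rw [ENNReal.ofReal_ofNat, memLp_two_iff_integrable_sq
      (continuous_sqrt.comp_aestronglyMeasurable hg.1)]
    exact hg.congr (hg0.mono fun x hx ↦ (sq_sqrt hx).symm)
  have hsq : ∀ g : X → ℝ, 0 ≤ᵐ[μ] g →
      (∫ x, √(g x) ^ (2 : ℝ) ∂μ) ^ (1 / 2 : ℝ) = √(∫ x, g x ∂μ) := fun g hg0 ↦ by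
    rw [sqrt_eq_rpow]
    congr 1
    exact integral_congr_ae (hg0.mono fun x hx ↦ by simp [sq_sqrt hx])
  have hholder := integral_mul_le_Lp_mul_Lq_of_nonneg HolderConjugate.two_two
    (.of_forall fun x ↦ sqrt_nonneg (a x)) (.of_forall fun x ↦ sqrt_nonneg (b x))
    (hmemLp a ha0 ha) (hmemLp b hb0 hb)
  rwa [hsq a ha0, hsq b hb0] at hholder

end CauchySchwarz

section KullbackLeibler

variable {X : Type*} [MeasurableSpace X] {μ ν : Measure X}

lemma sq_integral_abs_sub_one_le_integral_sub_one_mul_log [IsProbabilityMeasure ν] {f : X → ℝ}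
    (hf_nonneg : ∀ x, 0 ≤ f x) (hf_pos : ∀ᵐ x ∂ν, 0 < f x) (hf : Integrable f ν)
    (hf_one : ∫ x, f x ∂ν = 1) (hf_log : Integrable (fun x ↦ (f x - 1) * log (f x)) ν) :
    (∫ x, |f x - 1| ∂ν) ^ 2 ≤ ∫ x, (f x - 1) * log (f x) ∂ν := by
  have hmean : Integrable (fun x ↦ (f x + 1) / 2) ν := (hf.add (integrable_const 1)).div_const 2
  have hmean_one : ∫ x, (f x + 1) / 2 ∂ν = 1 := by
    rw [integral_div, integral_add hf (integrable_const 1), hf_one]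
    norm_num
  have hpointwise : ∀ᵐ x ∂ν, |f x - 1| ≤ √((f x - 1) * log (f x)) * √((f x + 1) / 2) := by
    filter_upwards [hf_pos] with x hx
    rw [← sqrt_mul (sub_one_mul_log_nonneg (hf_nonneg x)), ← sqrt_sq_eq_abs]
    exact sqrt_le_sqrt (sq_sub_one_le_sub_one_mul_log_mul _ hx)
  have hle : ∫ x, |f x - 1| ∂ν ≤ √(∫ x, (f x - 1) * log (f x) ∂ν) :=
    calc ∫ x, |f x - 1| ∂ν
        ≤ ∫ x, √((f x - 1) * log (f x)) * √((f x + 1) / 2) ∂ν :=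
          integral_mono_ae (hf.sub (integrable_const 1)).abs (hf_log.sqrt_mul_sqrt hmean) hpointwise
      _ ≤ √(∫ x, (f x - 1) * log (f x) ∂ν) * √(∫ x, (f x + 1) / 2 ∂ν) :=
          integral_sqrt_mul_sqrt_le (.of_forall fun x ↦ sub_one_mul_log_nonneg (hf_nonneg x))
            (.of_forall fun x ↦ show (0 : ℝ) ≤ (f x + 1) / 2 by linarith [hf_nonneg x]) hf_log hmean
      _ = √(∫ x, (f x - 1) * log (f x) ∂ν) := by rw [hmean_one, sqrt_one, mul_one]
  calc (∫ x, |f x - 1| ∂ν) ^ 2 ≤ √(∫ x, (f x - 1) * log (f x) ∂ν) ^ 2 :=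
        pow_le_pow_left₀ (integral_nonneg fun _ ↦ abs_nonneg _) hle 2
    _ = ∫ x, (f x - 1) * log (f x) ∂ν :=
        sq_sqrt (integral_nonneg fun x ↦ sub_one_mul_log_nonneg (hf_nonneg x))

lemma tvDist_sq_le_integral_llr_add_integral_llr [IsProbabilityMeasure μ] [IsProbabilityMeasure ν]
    (hμν : μ ≪ ν) (hνμ : ν ≪ μ) (hμν_int : Integrable (llr μ ν) μ)
    (hνμ_int : Integrable (llr ν μ) ν) :
    tvDist μ ν ^ 2 ≤ ∫ x, llr μ ν x ∂μ + ∫ x, llr ν μ x ∂ν := by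
  set f := fun x ↦ (μ.rnDeriv ν x).toReal
  have hllr : llr ν μ =ᵐ[ν] fun x ↦ -log (f x) := by
    filter_upwards [neg_llr hνμ] with x hx
    rw [show log (f x) = llr μ ν x from rfl, ← hx, Pi.neg_apply, neg_neg]
  have hlog_int : Integrable (fun x ↦ log (f x)) ν := by
    simpa using (hνμ_int.congr hllr).neg
  have hmul_log_int : Integrable (fun x ↦ f x * log (f x)) ν :=
    (integrable_rnDeriv_mul_log_iff hμν).2 hμν_int
  have hsum : ∫ x, llr μ ν x ∂μ + ∫ x, llr ν μ x ∂ν = ∫ x, (f x - 1) * log (f x) ∂ν := by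
    rw [← integral_rnDeriv_mul_log hμν, integral_congr_ae hllr, integral_neg, ← sub_eq_add_neg,
      ← integral_sub hmul_log_int hlog_int]
    simp only [sub_one_mul]
  have hf_pos : ∀ᵐ x ∂ν, 0 < f x := by
    filter_upwards [hνμ.ae_le (Measure.rnDeriv_pos hμν), Measure.rnDeriv_lt_top μ ν] with x h0 htop
    exact ENNReal.toReal_pos h0.ne' htop.ne
  have hf_one : ∫ x, f x ∂ν = 1 := by simp [f, Measure.integral_toReal_rnDeriv hμν]
  rw [hsum]
  calc tvDist μ ν ^ 2 ≤ (∫ x, |f x - 1| ∂ν) ^ 2 :=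
        pow_le_pow_left₀ ENNReal.toReal_nonneg (tvDist_le_integral_abs_toReal_rnDeriv_sub_one hμν) 2
    _ ≤ ∫ x, (f x - 1) * log (f x) ∂ν :=
        sq_integral_abs_sub_one_le_integral_sub_one_mul_log (fun _ ↦ ENNReal.toReal_nonneg) hf_pos
          Measure.integrable_toReal_rnDeriv hf_one
          (by simp_rw [sub_one_mul]; exact hmul_log_int.sub hlog_int)

lemma klDiv_ne_bot (μ ν : Measure X) : klDiv μ ν ≠ ⊥ := by
  unfold klDiv
  split_ifs <;> simp

lemma tvDist_sq_le_klDiv_add_klDiv [IsProbabilityMeasure μ] [IsProbabilityMeasure ν] :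
    ((tvDist μ ν ^ 2 : ℝ) : EReal) ≤ klDiv μ ν + klDiv ν μ := by
  by_cases hμν : μ ≪ ν ∧ Integrable (llr μ ν) μ
  swap
  · rw [show klDiv μ ν = ⊤ from if_neg hμν, EReal.top_add_of_ne_bot (klDiv_ne_bot ν μ)]
    exact le_top
  by_cases hνμ : ν ≪ μ ∧ Integrable (llr ν μ) ν
  swap
  · rw [show klDiv ν μ = ⊤ from if_neg hνμ, EReal.add_top_of_ne_bot (klDiv_ne_bot μ ν)]
    exact le_top
  rw [show klDiv μ ν = _ from if_pos hμν, show klDiv ν μ = _ from if_pos hνμ, ← EReal.coe_add,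
    EReal.coe_le_coe_iff]
  exact tvDist_sq_le_integral_llr_add_integral_llr hμν.1 hνμ.1 hμν.2 hνμ.2

end KullbackLeibler

section MMD

variable {X : Type*} [MeasurableSpace X] {k : X → X → ℝ} {C : ℝ} {μ ν : Measure X}

/-- `∬ k d(μ - ν) d(μ - ν)`, expanded by bilinearity. -/
noncomputable def mmdSq (k : X → X → ℝ) (μ ν : Measure X) : ℝ :=
  (∫ x, ∫ y, k x y ∂μ ∂μ) - (∫ x, ∫ y, k x y ∂ν ∂μ)
    - ((∫ x, ∫ y, k x y ∂μ ∂ν) - (∫ x, ∫ y, k x y ∂ν ∂ν))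

lemma measurable_integral_kernel (hk : Measurable (Function.uncurry k)) (ρ : Measure X)
    [SFinite ρ] : Measurable fun x ↦ ∫ y, k x y ∂ρ :=
  hk.stronglyMeasurable.integral_prod_right'.measurable

lemma integrable_integral_kernel (hk : Measurable (Function.uncurry k)) (hkC : ∀ x y, |k x y| ≤ C)
    (ρ m : Measure X) [IsFiniteMeasure ρ] [IsFiniteMeasure m] :
    Integrable (fun x ↦ ∫ y, k x y ∂ρ) m :=
  .of_bound (measurable_integral_kernel hk ρ).aestronglyMeasurable (C * ρ.real Set.univ)
    (.of_forall fun x ↦ norm_integral_le_of_norm_le_const (.of_forall (hkC x)))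

lemma mmdSq_eq_integral_sub_integral (hk : Measurable (Function.uncurry k))
    (hkC : ∀ x y, |k x y| ≤ C) [IsFiniteMeasure μ] [IsFiniteMeasure ν] :
    mmdSq k μ ν = ∫ x, (∫ y, k x y ∂μ - ∫ y, k x y ∂ν) ∂μ
      - ∫ x, (∫ y, k x y ∂μ - ∫ y, k x y ∂ν) ∂ν := by
  rw [integral_sub (integrable_integral_kernel hk hkC μ μ) (integrable_integral_kernel hk hkC ν μ),
    integral_sub (integrable_integral_kernel hk hkC μ ν) (integrable_integral_kernel hk hkC ν ν),
    mmdSq]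

lemma mmdSq_le_mul_tvDist_sq (hk : Measurable (Function.uncurry k)) (hkC : ∀ x y, |k x y| ≤ C)
    [IsFiniteMeasure μ] [IsFiniteMeasure ν] : mmdSq k μ ν ≤ C * tvDist μ ν ^ 2 := by
  have hinner : ∀ x, |∫ y, k x y ∂μ - ∫ y, k x y ∂ν| ≤ C * tvDist μ ν := fun x ↦
    abs_integral_sub_integral_le_mul_tvDist_s18 hk.of_uncurry_left (hkC x)
  rw [mmdSq_eq_integral_sub_integral hk hkC, sq, ← mul_assoc]
  exact (le_abs_self _).trans <| abs_integral_sub_integral_le_mul_tvDist_s18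
    ((measurable_integral_kernel hk μ).sub (measurable_integral_kernel hk ν)) hinner

end MMD

theorem mmd_relatively_smooth_wrt_entropy_general
    {X : Type*} [MeasurableSpace X]
    (k : X → X → ℝ) (hk_meas : Measurable (Function.uncurry k))
    (hk_symm : ∀ x y, k x y = k y x)
    (hk_psd : ∀ (n : ℕ) (x : Fin n → X) (a : Fin n → ℝ),
      0 ≤ ∑ i, ∑ j, a i * a j * k (x i) (x j))
    (ck : ℝ) (hck : ∀ x, k x x ≤ ck)
    (μ ν : Measure X)
    [IsProbabilityMeasure μ] [IsProbabilityMeasure ν] :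
    ((∫ x, 2 * ((∫ y, k y x ∂μ) - (∫ y, k y x ∂ν)) ∂μ)
        - (∫ x, 2 * ((∫ y, k y x ∂μ) - (∫ y, k y x ∂ν)) ∂ν)
      = 2 * ((∫ x, ∫ y, k x y ∂μ ∂μ) - (∫ x, ∫ y, k x y ∂ν ∂μ)
          - ((∫ x, ∫ y, k x y ∂μ ∂ν) - (∫ x, ∫ y, k x y ∂ν ∂ν)))) ∧
    (2 * ((∫ x, ∫ y, k x y ∂μ ∂μ) - (∫ x, ∫ y, k x y ∂ν ∂μ)
          - ((∫ x, ∫ y, k x y ∂μ ∂ν) - (∫ x, ∫ y, k x y ∂ν ∂ν)))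
      ≤ 2 * ck * (tvDist μ ν) ^ 2) ∧
    (((2 * ck * (tvDist μ ν) ^ 2 : ℝ) : EReal)
      ≤ ((4 * ck : ℝ) : EReal) * (klDiv μ ν + klDiv ν μ)) := by
  have hk : IsPosSemidefKernel k := hk_psd
  have hk_abs : ∀ x y, |k x y| ≤ ck := hk.abs_apply_le hk_symm hck
  obtain ⟨x₀⟩ := nonempty_of_isProbabilityMeasure μ
  have hck_nonneg : 0 ≤ ck := (abs_nonneg _).trans (hk_abs x₀ x₀)
  have hswap : ∀ (ρ : Measure X) x, ∫ y, k y x ∂ρ = ∫ y, k x y ∂ρ := fun ρ x ↦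
    integral_congr_ae (.of_forall fun y ↦ hk_symm y x)
  refine ⟨?_, ?_, ?_⟩
  · simp only [hswap, integral_const_mul, ← mul_sub]
    rw [← mmdSq_eq_integral_sub_integral hk_meas hk_abs, mmdSq]
  · rw [← mmdSq, mul_assoc]
    exact mul_le_mul_of_nonneg_left (mmdSq_le_mul_tvDist_sq hk_meas hk_abs) zero_le_two
  · calc ((2 * ck * tvDist μ ν ^ 2 : ℝ) : EReal)
        ≤ ((4 * ck : ℝ) : EReal) * ((tvDist μ ν ^ 2 : ℝ) : EReal) := by
          rw [← EReal.coe_mul, EReal.coe_le_coe_iff]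
          nlinarith [sq_nonneg (tvDist μ ν)]
      _ ≤ ((4 * ck : ℝ) : EReal) * (klDiv μ ν + klDiv ν μ) :=
          mul_le_mul_of_nonneg_left tvDist_sq_le_klDiv_add_klDiv (by exact_mod_cast by positivity)

/-- Relative smoothness of the squared MMD w.r.t. the negative entropy: for a
bounded measurable symmetric positive semi-definite kernel `k` with `k(x,x) ≤ c_k`, and
probability measures `μ, ν`, the monotonicity bracket of the first variation
`∇MMD²(·, νs)(x) = 2(∫k(·,x)dμ − ∫k(·,x)dνs)` satisfies
`⟨∇MMD²(μ,νs) − ∇MMD²(ν,νs), μ − ν⟩ = 2∬k d(μ−ν)d(μ−ν) ≤ 2c_k·‖μ−ν‖²_TV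
≤ 4c_k·(KL(μ|ν) + KL(ν|μ))`; hence `MMD²(·,νs)` is `4c_k`-smooth relative to the negative
entropy. -/
theorem mmd_relatively_smooth_wrt_entropy
    {X : Type*} [MeasurableSpace X]
    (k : X → X → ℝ) (hk_meas : Measurable (Function.uncurry k))
    (hk_symm : ∀ x y, k x y = k y x)
    (hk_psd : ∀ (n : ℕ) (x : Fin n → X) (a : Fin n → ℝ),
      0 ≤ ∑ i, ∑ j, a i * a j * k (x i) (x j))
    (ck : ℝ) (hck : ∀ x, k x x ≤ ck)
    (νs μ ν : Measure X)
    [IsProbabilityMeasure νs] [IsProbabilityMeasure μ] [IsProbabilityMeasure ν] :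
    ((∫ x, 2 * ((∫ y, k y x ∂μ) - (∫ y, k y x ∂ν)) ∂μ)
        - (∫ x, 2 * ((∫ y, k y x ∂μ) - (∫ y, k y x ∂ν)) ∂ν)
      = 2 * ((∫ x, ∫ y, k x y ∂μ ∂μ) - (∫ x, ∫ y, k x y ∂ν ∂μ)
          - ((∫ x, ∫ y, k x y ∂μ ∂ν) - (∫ x, ∫ y, k x y ∂ν ∂ν)))) ∧
    (2 * ((∫ x, ∫ y, k x y ∂μ ∂μ) - (∫ x, ∫ y, k x y ∂ν ∂μ)
          - ((∫ x, ∫ y, k x y ∂μ ∂ν) - (∫ x, ∫ y, k x y ∂ν ∂ν)))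
      ≤ 2 * ck * (tvDist μ ν) ^ 2) ∧
    (((2 * ck * (tvDist μ ν) ^ 2 : ℝ) : EReal)
      ≤ ((4 * ck : ℝ) : EReal) * (klDiv μ ν + klDiv ν μ)) :=
  mmd_relatively_smooth_wrt_entropy_general k hk_meas hk_symm hk_psd ck hck μ ν
end

section
/- Optimal value and minimizer of the latent-EM objective: let K(x,dy) = k(x,y) ν★(dy) be a Markov kernel, T_K μ = ∫ μ(dx) K(x,·), and F(π) = KL(π | p_X π ⊗ K) for π ∈ Π(·, ν★) (couplings with second marginal ν★). Let μ★ minimize μ ↦ KL(ν★ | T_K μ) over probability measures on X and assume T_K μ★ ≫ ν★. Then π★(dx,dy) = μ★(dx) k(x,y) ν★(dy)/(T_K μ★)(dy) belongs to Π(·,ν★) and minimizes F over Π(·,ν★), with F(π★) = KL(ν★ | T_K μ★). -/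
/-!
Lower bound: projecting a coupling `q` with `q.snd = νs` onto `Y` maps `q.fst ⊗ₘ κ` to the
mixture `κ ∘ₘ q.fst`, so by data processing
`KL(q ‖ q.fst ⊗ₘ κ) ≥ KL(νs ‖ κ ∘ₘ q.fst) ≥ KL(νs ‖ κ ∘ₘ μstar)`,
the last step being the minimality of `μstar`.

Upper bound at `pstar`: disintegrating `pstar = pstar.fst ⊗ₘ η`, the chain rule gives
`KL(pstar ‖ pstar.fst ⊗ₘ κ) ≤ KL(pstar ‖ μstar ⊗ₘ κ)`. Read from `Y` to `X`, Bayes' formula writes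
`pstar` and `μstar ⊗ₘ κ` as `νs` and `κ ∘ₘ μstar` followed by the same posterior kernel, hence
`KL(pstar ‖ μstar ⊗ₘ κ) = KL(νs ‖ κ ∘ₘ μstar)`.
-/

open MeasureTheory ProbabilityTheory Real

open scoped ENNReal

namespace MeasureTheory.Measure

variable {α β : Type*} {mα : MeasurableSpace α} {mβ : MeasurableSpace β}
  {μ : Measure α} {ν : Measure β} {c : α × β → ℝ≥0∞}

lemma compProd_eq_withDensity_prod [SFinite μ] [SFinite ν] {κ : Kernel α β} [IsSFiniteKernel κ]
    {f : α → β → ℝ≥0∞} (hf : Measurable (Function.uncurry f))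
    (hκ : ∀ a, κ a = ν.withDensity (f a)) :
    μ ⊗ₘ κ = (μ.prod ν).withDensity (Function.uncurry f) := by
  obtain rfl : κ = (Kernel.const α ν).withDensity f := by
    ext1 a
    rw [hκ a, Kernel.withDensity_apply _ hf, Kernel.const_apply]
  rw [compProd_withDensity hf, compProd_const]
  rfl

lemma fst_withDensity_prod [SFinite μ] [SFinite ν] (hc : Measurable c) :
    ((μ.prod ν).withDensity c).fst = μ.withDensity (fun x => ∫⁻ y, c (x, y) ∂ν) := by
  ext s hs
  rw [fst_apply hs, withDensity_apply _ (measurable_fst hs), withDensity_apply _ hs,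
    ← Set.prod_univ, ← prod_restrict, lintegral_prod _ hc.aemeasurable, restrict_univ]

lemma snd_withDensity_prod [SFinite μ] [SFinite ν] (hc : Measurable c) :
    ((μ.prod ν).withDensity c).snd = ν.withDensity (fun y => ∫⁻ x, c (x, y) ∂μ) := by
  ext s hs
  rw [snd_apply hs, withDensity_apply _ (measurable_snd hs), withDensity_apply _ hs,
    ← Set.univ_prod, ← prod_restrict, lintegral_prod_symm _ hc.aemeasurable, restrict_univ]

lemma map_swap_withDensity_prod [SFinite μ] [SFinite ν] (hc : Measurable c) :
    ((μ.prod ν).withDensity c).map Prod.swap = (ν.prod μ).withDensity (c ∘ Prod.swap) := by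
  ext s hs
  rw [map_apply measurable_swap hs, withDensity_apply _ (measurable_swap hs),
    withDensity_apply _ hs, ← prod_swap (μ := μ), setLIntegral_map hs (hc.comp measurable_swap)
      measurable_swap]
  rfl

/- `Measure.condKernel` needs standard Borel spaces; here the conditional kernel is explicit:
the normalized fibre density where it makes sense, `ν` on the remaining fibres. -/
lemma exists_isMarkovKernel_fst_compProd_eq [SFinite μ] [IsProbabilityMeasure ν]
    (hc : Measurable c) [IsFiniteMeasure ((μ.prod ν).withDensity c)] :
    ∃ η : Kernel α β, IsMarkovKernel η ∧
      ((μ.prod ν).withDensity c).fst ⊗ₘ η = (μ.prod ν).withDensity c := by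
  set g : α → ℝ≥0∞ := fun x => ∫⁻ y, c (x, y) ∂ν
  have hg : Measurable g := hc.lintegral_prod_right'
  set f : α → β → ℝ≥0∞ := fun x y => if g x = 0 ∨ g x = ∞ then 1 else c (x, y) / g x
  have hf : Measurable (Function.uncurry f) :=
    Measurable.ite (((measurableSet_singleton 0).union (measurableSet_singleton ∞)).preimage
      (hg.comp measurable_fst)) measurable_const (hc.div (hg.comp measurable_fst))
  have hη : ∀ x, (Kernel.const α ν).withDensity f x = ν.withDensity (f x) := fun x => by
    rw [Kernel.withDensity_apply _ hf, Kernel.const_apply]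
  have hη_markov : IsMarkovKernel ((Kernel.const α ν).withDensity f) := by
    refine ⟨fun x => ⟨?_⟩⟩
    rw [hη, withDensity_apply _ MeasurableSet.univ, restrict_univ]
    by_cases hx : g x = 0 ∨ g x = ∞
    · simp [f, hx]
    · simp only [f, hx, if_false, div_eq_mul_inv]
      rw [lintegral_mul_const' _ _ (ENNReal.inv_ne_top.2 (not_or.1 hx).1),
        ENNReal.mul_inv_cancel (not_or.1 hx).1 (not_or.1 hx).2]
  refine ⟨_, hη_markov, ?_⟩
  rw [compProd_eq_withDensity_prod hf hη, fst_withDensity_prod hc, prod_withDensity_left hg,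
    ← withDensity_mul _ (show Measurable fun z : α × β => g z.1 from hg.comp measurable_fst) hf]
  refine withDensity_congr_ae ((ae_prod_mem_iff_ae_ae_mem
    (measurableSet_eq_fun ((hg.comp measurable_fst).mul hf) hc)).2 ?_)
  have hg_fin : ∀ᵐ x ∂μ, g x < ∞ := ae_lt_top hg (by
    rw [← lintegral_prod _ hc.aemeasurable, ← setLIntegral_univ, ← withDensity_apply _ .univ]
    exact measure_ne_top _ _)
  filter_upwards [hg_fin] with x hx
  by_cases hx0 : g x = 0
  · filter_upwards [(lintegral_eq_zero_iff (hc.comp measurable_prodMk_left)).1 hx0] with y hy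
    simp [f, hx0, show c (x, y) = 0 from hy]
  · refine .of_forall fun y => ?_
    simp only [Pi.mul_apply, Function.uncurry_apply_pair, f, hx0, hx.ne, or_self, if_false]
    exact ENNReal.mul_div_cancel hx0 hx.ne

end MeasureTheory.Measure

namespace InformationTheory

variable {α β : Type*} {mα : MeasurableSpace α} {mβ : MeasurableSpace β}

lemma klDiv_map_swap (μ ν : Measure (α × β)) [IsFiniteMeasure μ] [IsFiniteMeasure ν] :
    klDiv (μ.map Prod.swap) (ν.map Prod.swap) = klDiv μ ν := by
  refine le_antisymm (klDiv_map_le μ ν measurable_swap) ?_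
  calc klDiv μ ν
      = klDiv ((μ.map Prod.swap).map Prod.swap) ((ν.map Prod.swap).map Prod.swap) := by
        simp [Measure.map_map measurable_swap measurable_swap]
    _ ≤ _ := klDiv_map_le _ _ measurable_swap

lemma klDiv_snd_le (ρ : Measure (α × β)) [IsFiniteMeasure ρ] (κ : Kernel α β)
    [IsMarkovKernel κ] : klDiv ρ.snd (κ ∘ₘ ρ.fst) ≤ klDiv ρ (ρ.fst ⊗ₘ κ) := by
  rw [← Measure.snd_compProd]
  exact klDiv_map_le _ _ measurable_snd

lemma klDiv_fst_compProd_le {ρ : Measure (α × β)} [IsFiniteMeasure ρ] {η : Kernel α β}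
    [IsMarkovKernel η] (hρ : ρ.fst ⊗ₘ η = ρ) (μ : Measure α) [IsFiniteMeasure μ]
    (κ : Kernel α β) [IsMarkovKernel κ] :
    klDiv ρ (ρ.fst ⊗ₘ κ) ≤ klDiv ρ (μ ⊗ₘ κ) := by
  have h := klDiv_compProd_eq_add ρ.fst μ η κ
  rw [hρ] at h
  rw [h]
  exact le_add_self

end InformationTheory

lemma klDiv_eq_coe_klDiv_s19 {α : Type*} [MeasurableSpace α] (μ ν : Measure α)
    [IsProbabilityMeasure μ] [IsProbabilityMeasure ν] :
    klDiv μ ν = (InformationTheory.klDiv μ ν : EReal) := by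
  rw [klDiv]
  split_ifs with h
  · have := InformationTheory.integral_llr_add_sub_measure_univ_nonneg h.1 h.2
    simp only [probReal_univ, add_sub_cancel_right] at this
    rw [InformationTheory.klDiv_of_ac_of_integrable h.1 h.2]
    simp [EReal.coe_ennreal_ofReal, this]
  · rw [InformationTheory.klDiv_eq_top_iff.2 (fun hac hint => h ⟨hac, hint⟩)]
    rfl

section LatentEM

variable {X Y : Type*} [MeasurableSpace X] [MeasurableSpace Y]

lemma lintegral_ofReal_ne_zero {f : X → ℝ} (hf_meas : Measurable f) (hf_pos : ∀ x, 0 < f x)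
    (μ : Measure X) [NeZero μ] : ∫⁻ x, ENNReal.ofReal (f x) ∂μ ≠ 0 := by
  intro h
  obtain ⟨x, hx⟩ := ((lintegral_eq_zero_iff hf_meas.ennreal_ofReal).1 h).exists
  exact (ENNReal.ofReal_pos.2 (hf_pos x)).ne' hx

lemma lintegral_ofReal_ne_top {f : X → ℝ} {M : ℝ} (hf_le : ∀ x, f x ≤ M) (μ : Measure X)
    [IsFiniteMeasure μ] : ∫⁻ x, ENNReal.ofReal (f x) ∂μ ≠ ⊤ :=
  ne_top_of_le_ne_top (lintegral_const_lt_top (μ := μ) ENNReal.ofReal_ne_top).ne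
    (lintegral_mono fun x => ENNReal.ofReal_le_ofReal (hf_le x))

noncomputable def densityPosterior (μ : Measure X) [SFinite μ] (k : X → Y → ℝ) : Kernel Y X :=
  (Kernel.const Y μ).withDensity fun y x =>
    ENNReal.ofReal (k x y) / ∫⁻ x', ENNReal.ofReal (k x' y) ∂μ

noncomputable abbrev posteriorCoupling (μ : Measure X) (k : X → Y → ℝ) (ν : Measure Y) :
    Measure (X × Y) :=
  (μ.prod ν).withDensity fun z =>
    ENNReal.ofReal (k z.1 z.2) / ∫⁻ x, ENNReal.ofReal (k x z.2) ∂μ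

variable {k : X → Y → ℝ} (hk_meas : Measurable (Function.uncurry k))
  (hk_pos : ∀ x y, 0 < k x y) {Mk : ℝ} (hk_bdd : ∀ x y, k x y ≤ Mk)
  {νs : Measure Y} [IsProbabilityMeasure νs] {κ : Kernel X Y} [IsMarkovKernel κ]
  (hκ : ∀ x, κ x = νs.withDensity fun y => ENNReal.ofReal (k x y))

include hk_meas hκ in
lemma comp_eq_withDensity_lintegral (μ : Measure X) [SFinite μ] :
    κ ∘ₘ μ = νs.withDensity fun y => ∫⁻ x, ENNReal.ofReal (k x y) ∂μ := by
  have hkd : Measurable (Function.uncurry fun x y => ENNReal.ofReal (k x y)) :=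
    hk_meas.ennreal_ofReal
  rw [← Measure.snd_compProd, Measure.compProd_eq_withDensity_prod hkd hκ,
    Measure.snd_withDensity_prod hkd]
  rfl

variable {μ : Measure X} [IsProbabilityMeasure μ]

include hk_meas in
lemma measurable_lintegral_ofReal : Measurable fun y => ∫⁻ x, ENNReal.ofReal (k x y) ∂μ :=
  Measurable.lintegral_prod_left (f := fun x y => ENNReal.ofReal (k x y)) hk_meas.ennreal_ofReal

include hk_meas in
lemma measurable_posteriorDensity :
    Measurable (Function.uncurry fun y x =>
      ENNReal.ofReal (k x y) / ∫⁻ x', ENNReal.ofReal (k x' y) ∂μ) :=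
  (hk_meas.comp measurable_swap).ennreal_ofReal.div
    ((measurable_lintegral_ofReal hk_meas).comp measurable_fst)

include hk_meas in
lemma densityPosterior_apply (y : Y) : densityPosterior μ k y =
    μ.withDensity fun x => ENNReal.ofReal (k x y) / ∫⁻ x', ENNReal.ofReal (k x' y) ∂μ := by
  rw [densityPosterior, Kernel.withDensity_apply _ (measurable_posteriorDensity hk_meas),
    Kernel.const_apply]

include hk_meas hk_pos hk_bdd in
lemma lintegral_ofReal_div_lintegral (y : Y) :
    ∫⁻ x, ENNReal.ofReal (k x y) / ∫⁻ x', ENNReal.ofReal (k x' y) ∂μ ∂μ = 1 := by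
  have h0 := lintegral_ofReal_ne_zero (f := (k · y)) (hk_meas.comp measurable_prodMk_right)
    (hk_pos · y) μ
  have htop := lintegral_ofReal_ne_top (hk_bdd · y) μ
  simp_rw [ENNReal.div_eq_inv_mul]
  rw [lintegral_const_mul' _ _ (ENNReal.inv_ne_top.2 h0), ENNReal.inv_mul_cancel h0 htop]

include hk_meas hk_pos hk_bdd in
lemma isMarkovKernel_densityPosterior : IsMarkovKernel (densityPosterior μ k) :=
  ⟨fun y => ⟨by rw [densityPosterior_apply hk_meas, withDensity_apply _ .univ,
    Measure.restrict_univ, lintegral_ofReal_div_lintegral hk_meas hk_pos hk_bdd]⟩⟩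

include hk_meas hk_pos hk_bdd hκ in
lemma map_swap_compProd_eq_compProd_densityPosterior :
    (μ ⊗ₘ κ).map Prod.swap = (κ ∘ₘ μ) ⊗ₘ densityPosterior μ k := by
  have := isMarkovKernel_densityPosterior (μ := μ) hk_meas hk_pos hk_bdd
  have hT := measurable_lintegral_ofReal hk_meas (μ := μ)
  have hkd : Measurable (Function.uncurry fun x y => ENNReal.ofReal (k x y)) :=
    hk_meas.ennreal_ofReal
  rw [Measure.compProd_eq_withDensity_prod hkd hκ, Measure.map_swap_withDensity_prod hkd,
    comp_eq_withDensity_lintegral hk_meas hκ,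
    Measure.compProd_eq_withDensity_prod (measurable_posteriorDensity hk_meas)
      (densityPosterior_apply hk_meas),
    prod_withDensity_left hT, ← withDensity_mul _ (show Measurable fun z : Y × X =>
      ∫⁻ x, ENNReal.ofReal (k x z.1) ∂μ from hT.comp measurable_fst)
      (measurable_posteriorDensity hk_meas)]
  congr 1
  funext z
  exact (ENNReal.mul_div_cancel
    (lintegral_ofReal_ne_zero (f := (k · z.1)) (hk_meas.comp measurable_prodMk_right)
      (hk_pos · z.1) μ) (lintegral_ofReal_ne_top (hk_bdd · z.1) μ)).symm

include hk_meas hk_pos hk_bdd in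
lemma map_swap_posteriorCoupling :
    (posteriorCoupling μ k νs).map Prod.swap = νs ⊗ₘ densityPosterior μ k := by
  have := isMarkovKernel_densityPosterior (μ := μ) hk_meas hk_pos hk_bdd
  have hc : Measurable fun z : X × Y =>
      ENNReal.ofReal (k z.1 z.2) / ∫⁻ x, ENNReal.ofReal (k x z.2) ∂μ :=
    (measurable_posteriorDensity hk_meas).comp measurable_swap
  rw [posteriorCoupling, Measure.map_swap_withDensity_prod hc,
    Measure.compProd_eq_withDensity_prod (measurable_posteriorDensity hk_meas)
      (densityPosterior_apply hk_meas)]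
  rfl

include hk_meas hk_pos hk_bdd in
lemma snd_posteriorCoupling : (posteriorCoupling μ k νs).snd = νs := by
  have := isMarkovKernel_densityPosterior (μ := μ) hk_meas hk_pos hk_bdd
  rw [← Measure.fst_map_swap, map_swap_posteriorCoupling hk_meas hk_pos hk_bdd,
    Measure.fst_compProd]

include hk_meas hk_pos hk_bdd in
lemma isProbabilityMeasure_posteriorCoupling :
    IsProbabilityMeasure (posteriorCoupling μ k νs) :=
  ⟨by rw [← Measure.snd_univ, snd_posteriorCoupling hk_meas hk_pos hk_bdd, measure_univ]⟩

include hk_meas hk_pos hk_bdd hκ in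
lemma klDiv_posteriorCoupling_compProd :
    InformationTheory.klDiv (posteriorCoupling μ k νs) (μ ⊗ₘ κ) =
      InformationTheory.klDiv νs (κ ∘ₘ μ) := by
  have := isMarkovKernel_densityPosterior (μ := μ) hk_meas hk_pos hk_bdd
  have := isProbabilityMeasure_posteriorCoupling (μ := μ) (νs := νs) hk_meas hk_pos hk_bdd
  rw [← InformationTheory.klDiv_map_swap, map_swap_posteriorCoupling hk_meas hk_pos hk_bdd,
    map_swap_compProd_eq_compProd_densityPosterior hk_meas hk_pos hk_bdd hκ,
    InformationTheory.klDiv_compProd_left]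

include hk_meas hk_pos hk_bdd hκ in
lemma klDiv_posteriorCoupling_fst_compProd_le :
    InformationTheory.klDiv (posteriorCoupling μ k νs) ((posteriorCoupling μ k νs).fst ⊗ₘ κ) ≤
      InformationTheory.klDiv νs (κ ∘ₘ μ) := by
  have := isProbabilityMeasure_posteriorCoupling (μ := μ) (νs := νs) hk_meas hk_pos hk_bdd
  have hc : Measurable fun z : X × Y =>
      ENNReal.ofReal (k z.1 z.2) / ∫⁻ x, ENNReal.ofReal (k x z.2) ∂μ :=
    (measurable_posteriorDensity hk_meas).comp measurable_swap
  obtain ⟨η, _, hdisint⟩ := Measure.exists_isMarkovKernel_fst_compProd_eq (μ := μ) (ν := νs) hc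
  rw [← klDiv_posteriorCoupling_compProd hk_meas hk_pos hk_bdd hκ]
  exact InformationTheory.klDiv_fst_compProd_le hdisint μ κ

end LatentEM

theorem latent_em_minimizer_general
    {X Y : Type*} [MeasurableSpace X] [MeasurableSpace Y]
    (νs : Measure Y) [IsProbabilityMeasure νs]
    (k : X → Y → ℝ) (hk_meas : Measurable (Function.uncurry k))
    (hk_pos : ∀ x y, 0 < k x y)
    (Mk : ℝ) (hk_bdd : ∀ x y, k x y ≤ Mk)
    (κ : ProbabilityTheory.Kernel X Y) [IsMarkovKernel κ]
    (hκ : ∀ x, κ x = νs.withDensity (fun y => ENNReal.ofReal (k x y)))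
    (μstar : Measure X) [IsProbabilityMeasure μstar]
    (hμstar_min : ∀ (μ : Measure X) [IsProbabilityMeasure μ],
      klDiv νs (νs.withDensity (fun y => ∫⁻ x, ENNReal.ofReal (k x y) ∂μstar))
        ≤ klDiv νs (νs.withDensity (fun y => ∫⁻ x, ENNReal.ofReal (k x y) ∂μ)))
    (pstar : Measure (X × Y))
    (hpstar : pstar = (μstar.prod νs).withDensity
      (fun z => ENNReal.ofReal (k z.1 z.2) / ∫⁻ x, ENNReal.ofReal (k x z.2) ∂μstar)) :
    IsProbabilityMeasure pstar ∧
    pstar.snd = νs ∧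
    (∀ (q : Measure (X × Y)) [IsProbabilityMeasure q], q.snd = νs →
      klDiv pstar (pstar.fst ⊗ₘ κ) ≤ klDiv q (q.fst ⊗ₘ κ)) ∧
    klDiv pstar (pstar.fst ⊗ₘ κ)
      = klDiv νs (νs.withDensity (fun y => ∫⁻ x, ENNReal.ofReal (k x y) ∂μstar)) := by
  change pstar = posteriorCoupling μstar k νs at hpstar
  subst hpstar
  have := isProbabilityMeasure_posteriorCoupling (μ := μstar) (νs := νs) hk_meas hk_pos hk_bdd
  have hsnd := snd_posteriorCoupling (μ := μstar) (νs := νs) hk_meas hk_pos hk_bdd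
  have hmix (μ : Measure X) [SFinite μ] :
      νs.withDensity (fun y => ∫⁻ x, ENNReal.ofReal (k x y) ∂μ) = κ ∘ₘ μ :=
    (comp_eq_withDensity_lintegral hk_meas hκ μ).symm
  have hlower (q : Measure (X × Y)) [IsProbabilityMeasure q] (hq : q.snd = νs) :
      InformationTheory.klDiv νs (κ ∘ₘ μstar) ≤ InformationTheory.klDiv q (q.fst ⊗ₘ κ) := by
    have hmin := hμstar_min q.fst
    rw [hmix, hmix, klDiv_eq_coe_klDiv_s19, klDiv_eq_coe_klDiv_s19,
      EReal.coe_ennreal_le_coe_ennreal_iff] at hmin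
    exact hmin.trans (hq ▸ InformationTheory.klDiv_snd_le q κ)
  have hupper := klDiv_posteriorCoupling_fst_compProd_le (μ := μstar) hk_meas hk_pos hk_bdd hκ
  refine ⟨this, hsnd, fun q _ hq => ?_, ?_⟩
  · rw [klDiv_eq_coe_klDiv_s19, klDiv_eq_coe_klDiv_s19, EReal.coe_ennreal_le_coe_ennreal_iff]
    exact hupper.trans (hlower q hq)
  · rw [hmix, klDiv_eq_coe_klDiv_s19, klDiv_eq_coe_klDiv_s19, EReal.coe_ennreal_eq_coe_ennreal_iff]
    exact le_antisymm hupper (hlower _ hsnd)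

/-- Optimal value and minimizer of the latent-EM objective: let
`κ(x, dy) = k(x,y) νs(dy)` be a Markov kernel with `k` bounded, measurable and positive,
`T_K μ = νs.withDensity (∫ k(x,·) dμ)` the mixture map, and
`F(π) = KL(π | p_X π ⊗ₘ κ)` on couplings with second marginal `νs`. If `μstar` minimizes
`μ ↦ KL(νs | T_K μ)` over probability measures on `X` and `νs ≪ T_K μstar`, then
`pstar(dx,dy) = μstar(dx) k(x,y) νs(dy)/(T_K μstar)(dy)` has second marginal `νs`,
minimizes `F` over couplings with second marginal `νs`, and `F(pstar) = KL(νs | T_K μstar)`. -/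
theorem latent_em_minimizer
    {X Y : Type*} [MeasurableSpace X] [MeasurableSpace Y] [Nonempty X] [Nonempty Y]
    (νs : Measure Y) [IsProbabilityMeasure νs]
    (k : X → Y → ℝ) (hk_meas : Measurable (Function.uncurry k))
    (hk_pos : ∀ x y, 0 < k x y)
    (Mk : ℝ) (hk_bdd : ∀ x y, k x y ≤ Mk)
    (κ : ProbabilityTheory.Kernel X Y) [IsMarkovKernel κ]
    (hκ : ∀ x, κ x = νs.withDensity (fun y => ENNReal.ofReal (k x y)))
    (μstar : Measure X) [IsProbabilityMeasure μstar]
    (hμstar_min : ∀ (μ : Measure X) [IsProbabilityMeasure μ],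
      klDiv νs (νs.withDensity (fun y => ∫⁻ x, ENNReal.ofReal (k x y) ∂μstar))
        ≤ klDiv νs (νs.withDensity (fun y => ∫⁻ x, ENNReal.ofReal (k x y) ∂μ)))
    (habs : νs ≪ νs.withDensity (fun y => ∫⁻ x, ENNReal.ofReal (k x y) ∂μstar))
    (pstar : Measure (X × Y))
    (hpstar : pstar = (μstar.prod νs).withDensity
      (fun z => ENNReal.ofReal (k z.1 z.2) / ∫⁻ x, ENNReal.ofReal (k x z.2) ∂μstar)) :
    IsProbabilityMeasure pstar ∧
    pstar.snd = νs ∧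
    (∀ (q : Measure (X × Y)) [IsProbabilityMeasure q], q.snd = νs →
      klDiv pstar (pstar.fst ⊗ₘ κ) ≤ klDiv q (q.fst ⊗ₘ κ)) ∧
    klDiv pstar (pstar.fst ⊗ₘ κ)
      = klDiv νs (νs.withDensity (fun y => ∫⁻ x, ENNReal.ofReal (k x y) ∂μstar)) :=
  latent_em_minimizer_general νs k hk_meas hk_pos Mk hk_bdd κ hκ μstar hμstar_min pstar hpstar
end
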